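/- arXiv:1910.13809 — 7 statements merged into one kernel-verified Lean document; each statement's English description precedes it below -/
import Mathlib

section
/- Let σ be a permutation of [n-1] and let k ∈ [n]. Let π = σ^{(k,1)} be the permutation of [n] obtained by adding 1 to every value of σ and inserting the value 1 at position k. Then crs(π) = crs(σ) + ut_k⁻(σ) − lt_k⁻(σ) + α_k(σ), where crs is the number of crossings, ut_k⁻(σ) = |{i < k : σ⁻¹(i) < i < σ(i)}|, lt_k⁻(σ) = |{i < k : σ(i) < i < σ⁻¹(i)}|, and α_k(σ) = |{i ≥ k : σ(i) < k}|. -/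
open scoped Classical

/-- The number of crossings of a permutation: pairs (i,j) with
i < j < σ(i) < σ(j) or σ(i) < σ(j) ≤ i < j. -/
noncomputable def crs {n : ℕ} (σ : Equiv.Perm (Fin n)) : ℕ :=
  (Finset.univ.filter (fun p : Fin n × Fin n =>
    (p.1 < p.2 ∧ p.2 < σ p.1 ∧ σ p.1 < σ p.2) ∨
    (σ p.1 < σ p.2 ∧ σ p.2 ≤ p.1 ∧ p.1 < p.2))).card

/-- Number of upper transients: i with σ⁻¹(i) < i < σ(i). -/
noncomputable def utCount {n : ℕ} (σ : Equiv.Perm (Fin n)) : ℕ :=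
  (Finset.univ.filter (fun i : Fin n => σ.symm i < i ∧ i < σ i)).card

/-- Number of lower transients: i with σ(i) < i < σ⁻¹(i). -/
noncomputable def ltCount {n : ℕ} (σ : Equiv.Perm (Fin n)) : ℕ :=
  (Finset.univ.filter (fun i : Fin n => σ i < i ∧ i < σ.symm i)).card

/-- σ contains the pattern τ. -/
def Contains {n k : ℕ} (σ : Equiv.Perm (Fin n)) (τ : Fin k → ℕ) : Prop :=
  ∃ f : Fin k → Fin n, StrictMono f ∧ ∀ x y, σ (f x) < σ (f y) ↔ τ x < τ y

/-- σ avoids the pattern τ. -/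
def Avoids {n k : ℕ} (σ : Equiv.Perm (Fin n)) (τ : Fin k → ℕ) : Prop :=
  ¬ Contains σ τ

def p123 : Fin 3 → ℕ := ![1, 2, 3]
def p132 : Fin 3 → ℕ := ![1, 3, 2]
def p213 : Fin 3 → ℕ := ![2, 1, 3]
def p231 : Fin 3 → ℕ := ![2, 3, 1]
def p312 : Fin 3 → ℕ := ![3, 1, 2]
def p321 : Fin 3 → ℕ := ![3, 2, 1]

/-- Generating polynomial of crs over permutations of [n] satisfying P. -/
noncomputable def Fpoly (n : ℕ) (P : Equiv.Perm (Fin n) → Prop) : Polynomial ℤ :=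
  ∑ σ : Equiv.Perm (Fin n), if P σ then Polynomial.X ^ crs σ else 0

/-! The value `1` of `π = σ^{(k,1)}` sits at position `k`, so `k` is never the right end of a
crossing, and the crossings starting at `k` are the pairs `(k, j + 1)` with `j ≥ k` and
`σ(j) < k`, counted by `α_k(σ)`. Deleting position `k` and value `1` turns every other pair of
positions of `π` into a pair of `σ`. All values move up by one but positions below `k` do not, so
the crossing conditions agree except where a position `j < k` equals a value `σ(i)`. This
creates one crossing `(σ⁻¹(j), j)` for every upper transient `j < k` and destroys one crossing
`(i, σ⁻¹(i))` for every lower transient `i < k`. -/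

open Finset

def IsCrossing {n : ℕ} (σ : Equiv.Perm (Fin n)) (i j : Fin n) : Prop :=
  (i < j ∧ j < σ i ∧ σ i < σ j) ∨ (σ i < σ j ∧ σ j ≤ i ∧ i < j)

instance {n : ℕ} (σ : Equiv.Perm (Fin n)) : DecidableRel (IsCrossing σ) := fun _ _ =>
  inferInstanceAs (Decidable (_ ∨ _))

theorem crs_eq_sum {n : ℕ} (σ : Equiv.Perm (Fin n)) :
    crs σ = ∑ i, ∑ j, if IsCrossing σ i j then 1 else 0 := by
  rw [crs, card_filter, Fintype.sum_prod_type]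
  rfl

theorem Fin.val_succAbove {n : ℕ} (p : Fin (n + 1)) (i : Fin n) :
    (p.succAbove i : ℕ) = if (i : ℕ) < p then (i : ℕ) else i + 1 := by
  unfold Fin.succAbove
  split_ifs <;> simp_all [Fin.lt_def]

theorem Equiv.Perm.sum_ite_and_apply_eq {α : Type*} [Fintype α] [DecidableEq α]
    (σ : Equiv.Perm α) (P : α → Prop) [DecidablePred P] (a : α) :
    (∑ j, if P j ∧ σ j = a then 1 else 0) = if P (σ.symm a) then 1 else 0 := by
  simp_rw [← σ.eq_symm_apply, and_comm (a := P _), ite_and]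
  exact Fintype.sum_ite_eq' _ _

theorem not_isCrossing_of_apply_eq_zero {n : ℕ} {π : Equiv.Perm (Fin (n + 1))} {q : Fin (n + 1)}
    (hq : π q = 0) (i : Fin (n + 1)) : ¬ IsCrossing π i q := by
  rintro (⟨-, -, h⟩ | ⟨h, -⟩) <;> rw [hq] at h <;> exact Fin.not_lt_zero _ h

section Insertion

variable {m : ℕ} {σ : Equiv.Perm (Fin m)} {π : Equiv.Perm (Fin (m + 1))} {p : Fin (m + 1)}

theorem isCrossing_self_succAbove_iff (hπ : ∀ i, π (p.succAbove i) = (σ i).succ)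
    (hp : π p = 0) (j : Fin m) :
    IsCrossing π p (p.succAbove j) ↔ (p : ℕ) ≤ j ∧ (σ j : ℕ) < p := by
  simp only [IsCrossing, Fin.lt_def, Fin.le_def, hπ, hp, Fin.val_succ, Fin.val_succAbove,
    Fin.val_zero]
  split_ifs <;> omega

theorem ite_isCrossing_succAbove_add (hπ : ∀ i, π (p.succAbove i) = (σ i).succ) (i j : Fin m) :
    (if IsCrossing π (p.succAbove i) (p.succAbove j) then 1 else 0)
        + (if ((i : ℕ) < p ∧ σ i < i ∧ i < j) ∧ σ j = i then 1 else 0)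
      = (if IsCrossing σ i j then 1 else 0)
        + (if ((j : ℕ) < p ∧ i < j ∧ j < σ j) ∧ σ i = j then 1 else 0) := by
  simp only [IsCrossing, Fin.lt_def, Fin.le_def, Fin.ext_iff, hπ, Fin.val_succ,
    Fin.val_succAbove]
  split_ifs <;> omega

theorem crs_of_apply_succAbove (hπ : ∀ i, π (p.succAbove i) = (σ i).succ) (hp : π p = 0) :
    crs π + #{i : Fin m | (i : ℕ) < p ∧ σ i < i ∧ i < σ.symm i}
      = crs σ + #{i : Fin m | (i : ℕ) < p ∧ σ.symm i < i ∧ i < σ i}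
        + #{i : Fin m | (p : ℕ) ≤ i ∧ (σ i : ℕ) < p} := by
  have hrow : (∑ j, if IsCrossing π p j then 1 else 0)
      = #{i : Fin m | (p : ℕ) ≤ i ∧ (σ i : ℕ) < p} := by
    rw [Fin.sum_univ_succAbove _ p, if_neg (not_isCrossing_of_apply_eq_zero hp p), zero_add,
      card_filter]
    simp_rw [isCrossing_self_succAbove_iff hπ hp]
  have hlower : (∑ i : Fin m, ∑ j : Fin m,
        if ((i : ℕ) < p ∧ σ i < i ∧ i < j) ∧ σ j = i then 1 else 0)
      = #{i : Fin m | (i : ℕ) < p ∧ σ i < i ∧ i < σ.symm i} := by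
    simp_rw [σ.sum_ite_and_apply_eq, card_filter]
  have hupper : (∑ i : Fin m, ∑ j : Fin m,
        if ((j : ℕ) < p ∧ i < j ∧ j < σ j) ∧ σ i = j then 1 else 0)
      = #{i : Fin m | (i : ℕ) < p ∧ σ.symm i < i ∧ i < σ i} := by
    rw [sum_comm]
    simp_rw [σ.sum_ite_and_apply_eq, card_filter]
  have hpairs := Fintype.sum_congr _ _ fun i =>
    Fintype.sum_congr _ _ (ite_isCrossing_succAbove_add hπ i)
  simp only [sum_add_distrib, hlower, hupper] at hpairs
  rw [crs_eq_sum π, Fin.sum_univ_succAbove _ p, hrow, crs_eq_sum σ]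
  simp_rw [Fin.sum_univ_succAbove (fun j => if IsCrossing π _ j then 1 else 0) p,
    if_neg (not_isCrossing_of_apply_eq_zero hp _), zero_add]
  omega

end Insertion

theorem crs_insert (n k : ℕ) (hn : 1 ≤ n) (hkn : k ≤ n)
    (σ : Equiv.Perm (Fin (n - 1))) (π : Equiv.Perm (Fin n))
    (h1 : ∀ (i : ℕ) (hik : i < k - 1),
      (π ⟨i, by omega⟩ : ℕ) = (σ ⟨i, by omega⟩ : ℕ) + 1)
    (h2 : (π ⟨k - 1, by omega⟩ : ℕ) = 0)
    (h3 : ∀ (i : ℕ) (hik : k - 1 ≤ i) (hin : i < n - 1),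
      (π ⟨i + 1, by omega⟩ : ℕ) = (σ ⟨i, by omega⟩ : ℕ) + 1) :
    (crs π : ℤ) = (crs σ : ℤ)
      + ((Finset.univ.filter (fun i : Fin (n - 1) =>
          (i : ℕ) < k - 1 ∧ σ.symm i < i ∧ i < σ i)).card : ℤ)
      - ((Finset.univ.filter (fun i : Fin (n - 1) =>
          (i : ℕ) < k - 1 ∧ σ i < i ∧ i < σ.symm i)).card : ℤ)
      + ((Finset.univ.filter (fun i : Fin (n - 1) =>
          k - 1 ≤ (i : ℕ) ∧ (σ i : ℕ) < k - 1)).card : ℤ) := by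
  obtain ⟨m, rfl⟩ : ∃ m, n = m + 1 := ⟨n - 1, by omega⟩
  set p : Fin (m + 1) := ⟨k - 1, by omega⟩
  have hπ (i : Fin m) : π (p.succAbove i) = (σ i).succ := by
    by_cases hi : (i : ℕ) < k - 1
    · rw [show p.succAbove i = ⟨i, by omega⟩ from
        Fin.ext (by simp [Fin.val_succAbove, p, hi])]
      exact Fin.ext (h1 i hi)
    · rw [show p.succAbove i = ⟨i + 1, by omega⟩ from
        Fin.ext (by simp [Fin.val_succAbove, p, hi])]
      exact Fin.ext (h3 i (by omega) i.isLt)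
  have key := congrArg ((↑) : ℕ → ℤ) (crs_of_apply_succAbove hπ (Fin.ext h2))
  push_cast at key
  -- `Fin (m + 1 - 1)` and `Fin m` agree only up to unfolding, hence `ring1!`.
  linear_combination (norm := ring1!) key
end

section
/- For every permutation σ, if π = σ⁻¹ then crs(π) = crs(σ) + ut(σ) − lt(σ), where ut(σ) is the number of indices i with σ⁻¹(i) < i < σ(i) and lt(σ) is the number of indices i with σ(i) < i < σ⁻¹(i). -/
open scoped Classical

/-! The substitution `(i, j) ↦ (σ i, σ j)` turns the lower crossings `σ i < σ j ≤ i < j` of `σ`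
into the weak upper crossings `i < j ≤ σ⁻¹ i < σ⁻¹ j` of `σ⁻¹`, so `crs σ = U σ + W σ⁻¹`, where
`U` counts upper crossings `i < j < σ i < σ j` and `W` allows `j = σ i`. A weak upper crossing
with `j = σ i` is `(σ⁻¹ j, j)` for an upper transient `j`, so `W σ = U σ + ut σ`, and
`lt σ = ut σ⁻¹`. Hence `crs σ⁻¹ - ut σ = U σ⁻¹ + U σ = crs σ - lt σ`. -/

open Finset

namespace Equiv.Perm

variable {n : ℕ} (σ : Perm (Fin n))

noncomputable def upperCrossings : Finset (Fin n × Fin n) :=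
  univ.filter fun p => p.1 < p.2 ∧ p.2 < σ p.1 ∧ σ p.1 < σ p.2

noncomputable def weakUpperCrossings : Finset (Fin n × Fin n) :=
  univ.filter fun p => p.1 < p.2 ∧ p.2 ≤ σ p.1 ∧ σ p.1 < σ p.2

theorem crs_eq_card_upperCrossings_add_card_weakUpperCrossings_symm :
    crs σ = #(upperCrossings σ) + #(weakUpperCrossings σ.symm) := by
  rw [crs, filter_or, card_union_of_disjoint]
  · congr 1
    refine card_equiv (σ.prodCongr σ) fun p => ?_
    simp [weakUpperCrossings]
  · refine disjoint_filter.2 fun p _ hU hL => ?_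
    exact (hU.2.1.trans hU.2.2).not_ge (hL.2.1.trans hL.2.2.le)

theorem card_weakUpperCrossings :
    #(weakUpperCrossings σ) = #(upperCrossings σ) + utCount σ := by
  have hsplit : weakUpperCrossings σ = upperCrossings σ ∪
      (univ.filter fun i => σ.symm i < i ∧ i < σ i).image fun i => (σ.symm i, i) := by
    ext ⟨i, j⟩
    simp only [weakUpperCrossings, upperCrossings, mem_union, mem_filter, mem_univ, true_and,
      mem_image, Prod.mk.injEq]
    constructor
    · rintro ⟨hij, hj, hσ⟩
      rcases hj.lt_or_eq with hj | hj
      · exact .inl ⟨hij, hj, hσ⟩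
      · exact .inr ⟨j, ⟨by simpa [hj] using hij, hj ▸ hσ⟩, by simp [hj], rfl⟩
    · rintro (⟨hij, hj, hσ⟩ | ⟨k, ⟨hk, hk'⟩, rfl, rfl⟩)
      · exact ⟨hij, hj.le, hσ⟩
      · exact ⟨hk, by simp, by simpa using hk'⟩
  rw [hsplit, card_union_of_disjoint, utCount,
    card_image_of_injective _ fun _ _ h => (Prod.ext_iff.1 h).2]
  refine disjoint_left.2 fun p hU hE => ?_
  obtain ⟨k, -, rfl⟩ := mem_image.1 hE
  simp [upperCrossings] at hU

theorem ltCount_eq_utCount_symm : ltCount σ = utCount σ.symm := by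
  simp [ltCount, utCount]

end Equiv.Perm

open Equiv.Perm in
theorem crs_inv (n : ℕ) (σ : Equiv.Perm (Fin n)) :
    (crs σ.symm : ℤ) = (crs σ : ℤ) + (utCount σ : ℤ) - (ltCount σ : ℤ) := by
  have hcrs := crs_eq_card_upperCrossings_add_card_weakUpperCrossings_symm σ
  have hcrs' := crs_eq_card_upperCrossings_add_card_weakUpperCrossings_symm σ.symm
  have hw := card_weakUpperCrossings σ
  have hw' := card_weakUpperCrossings σ.symm
  rw [Equiv.symm_symm] at hcrs'
  rw [ltCount_eq_utCount_symm]
  omega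
end

section
/- For every permutation σ of [n], if π = rc(σ) is the reverse-complement of σ, i.e., π(i) = n+1−σ(n+1−i), then crs(π) = crs(σ) + ut(σ) − lt(σ). -/
open scoped Classical

/-!
A crossing of `σ` is a pair `i < j` with `σ i < σ j` and either `j < σ i` or `σ j ≤ i`.
Transported along `(i, j) ↦ (rev j, rev i)`, the crossings of `rc σ = Fin.revPerm.permCongr σ`
become the pairs `i < j` with `σ i < σ j` and either `j ≤ σ i` or `σ j < i`: only the boundary
cases change. Allowing both boundary cases gives `weakCrs σ`, which exceeds `crs σ` by the pairs
with `j = σ i`, i.e. by the upper transients `j`, and `crs (rc σ)` by the pairs with `σ j = i`,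
i.e. by the lower transients `i`.
-/

open Finset

lemma card_filter_or_of_disjoint {α : Type*} [DecidableEq α] (s : Finset α) (p q : α → Prop)
    [DecidablePred p] [DecidablePred q] (h : ∀ a, p a → ¬q a) :
    #{a ∈ s | p a ∨ q a} = #{a ∈ s | p a} + #{a ∈ s | q a} := by
  rw [filter_or, card_union_of_disjoint (disjoint_filter.2 fun a _ => h a)]

section

variable {n : ℕ} (σ : Equiv.Perm (Fin n))

noncomputable def weakCrs : ℕ :=
  #{p : Fin n × Fin n | (p.1 < p.2 ∧ σ p.1 < σ p.2) ∧ (p.2 ≤ σ p.1 ∨ σ p.2 ≤ p.1)}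

lemma utCount_eq_card :
    utCount σ = #{p : Fin n × Fin n | (p.1 < p.2 ∧ σ p.1 < σ p.2) ∧ p.2 = σ p.1} := by
  refine card_nbij' (fun i => (σ.symm i, i)) Prod.snd ?_ ?_ ?_ ?_
  · rintro i hi
    simp_all
  · rintro ⟨i, j⟩ hp
    simp only [coe_filter, mem_univ, true_and, Set.mem_ofPred_eq] at hp
    obtain ⟨hij, rfl⟩ := hp
    simpa using hij
  · intro i _
    rfl
  · rintro ⟨i, j⟩ hp
    simp only [coe_filter, mem_univ, true_and, Set.mem_ofPred_eq] at hp
    obtain ⟨-, rfl⟩ := hp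
    simp

lemma ltCount_eq_card :
    ltCount σ = #{p : Fin n × Fin n | (p.1 < p.2 ∧ σ p.1 < σ p.2) ∧ σ p.2 = p.1} := by
  refine card_nbij' (fun i => (i, σ.symm i)) Prod.fst ?_ ?_ ?_ ?_
  · rintro i hi
    simp_all
  · rintro ⟨i, j⟩ hp
    simp only [coe_filter, mem_univ, true_and, Set.mem_ofPred_eq] at hp
    obtain ⟨hij, rfl⟩ := hp
    simpa [and_comm] using hij
  · intro i _
    rfl
  · rintro ⟨i, j⟩ hp
    simp only [coe_filter, mem_univ, true_and, Set.mem_ofPred_eq] at hp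
    obtain ⟨-, rfl⟩ := hp
    simp

lemma crs_add_utCount : crs σ + utCount σ = weakCrs σ := by
  rw [crs, utCount_eq_card, ← card_filter_or_of_disjoint]
  · unfold weakCrs
    congr 1
    ext ⟨i, j⟩
    simp only [mem_filter, mem_univ, true_and, Fin.lt_def, Fin.le_def, Fin.ext_iff]
    omega
  · rintro ⟨i, j⟩
    simp only [Fin.lt_def, Fin.le_def, Fin.ext_iff]
    omega

lemma crs_permCongr_revPerm :
    crs (Fin.revPerm.permCongr σ) =
      #{p : Fin n × Fin n | (p.1 < p.2 ∧ σ p.1 < σ p.2) ∧ (p.2 ≤ σ p.1 ∨ σ p.2 < p.1)} := by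
  refine card_equiv ((Equiv.prodComm _ _).trans (Fin.revPerm.prodCongr Fin.revPerm)) ?_
  rintro ⟨i, j⟩
  simp only [mem_filter, mem_univ, true_and, Equiv.permCongr_apply, Equiv.trans_apply,
    Equiv.prodComm_apply, Prod.swap_prod_mk, Equiv.prodCongr_apply, Prod.map, Fin.revPerm_symm,
    Fin.revPerm_apply]
  have := (σ i.rev).isLt
  have := (σ j.rev).isLt
  simp only [Fin.lt_def, Fin.le_def, Fin.val_rev]
  omega

lemma crs_permCongr_revPerm_add_ltCount :
    crs (Fin.revPerm.permCongr σ) + ltCount σ = weakCrs σ := by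
  rw [crs_permCongr_revPerm, ltCount_eq_card, ← card_filter_or_of_disjoint]
  · unfold weakCrs
    congr 1
    ext ⟨i, j⟩
    simp only [mem_filter, mem_univ, true_and, Fin.lt_def, Fin.le_def, Fin.ext_iff]
    omega
  · rintro ⟨i, j⟩
    simp only [Fin.lt_def, Fin.le_def, Fin.ext_iff]
    omega

end

theorem crs_reverse_complement (n : ℕ) (σ π : Equiv.Perm (Fin n))
    (h : ∀ i : Fin n,
      (π i : ℕ) = n - 1 - (σ ⟨n - 1 - (i : ℕ), by have := i.isLt; omega⟩ : ℕ)) :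
    (crs π : ℤ) = (crs σ : ℤ) + (utCount σ : ℤ) - (ltCount σ : ℤ) := by
  have hπ : π = Fin.revPerm.permCongr σ := by
    ext i
    have hrev : (⟨n - 1 - (i : ℕ), by omega⟩ : Fin n) = i.rev :=
      Fin.ext (by rw [Fin.val_mk, Fin.val_rev]; omega)
    have := (σ i.rev).isLt
    simp only [h i, hrev, Equiv.permCongr_apply, Fin.revPerm_symm, Fin.revPerm_apply, Fin.val_rev]
    omega
  have hσ := crs_add_utCount σ
  have hrc := crs_permCongr_revPerm_add_ltCount σ
  subst hπ
  omega
end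

section
/- For all n ≥ 1, k ≥ 0, and τ ∈ {132, 213}, the number of permutations of [n] avoiding both 123 and τ and having exactly k crossings equals δ_{k,0} + C(n−1, k+1), where δ is the Kronecker delta and C denotes the binomial coefficient. -/
open scoped Classical

/-!
Counting positions from `0`, a permutation avoids `123` and `132` iff no entry has two larger
entries after it, which by a pigeonhole count means `n ≤ σ i + i + 2` for every `i`. Such a
permutation is determined by the set `S ⊆ [0, n - 2]` of positions with `σ i + i + 2 = n`: it is
the skew sum of blocks `(k - 1) (k - 2) ⋯ 1 k`, one for each maximal run of `S` together with the
first position after it. A pair `i < j` with `σ i < σ j` has `i ∈ S` and `j` the first position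
after `i` outside `S`; it is a crossing iff `S` misses a position between `i` and its mirror image
`n - 2 - i` (the mirror excluded when it lies above `i`). Listing `[0, n - 2]` from the outside
in, `n - 2, 0, n - 3, 1, …`, this says that some position outside `S` comes after `i`. So `crs σ`
counts the elements of `S` followed by a gap in this order, and the subsets of an `m`-element
chain with `k` such elements number `δ_{k,0} + C(m, k + 1)`, by induction on the largest element.

The case `τ = 213` reduces to `τ = 132` through `σ ↦ rc(σ⁻¹)`, which fixes `123`, exchanges `132`
and `213`, and preserves crossings.
-/

open Finset Equiv

theorem card_filter_powerset_card_filter_exists_lt {α β : Type*} [DecidableEq α] [LinearOrder β]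
    (r : α → β) (U : Finset α) (hr : Set.InjOn r U) (k : ℕ) :
    #{T ∈ U.powerset | #{s ∈ T | ∃ u ∈ U \ T, r s < r u} = k} =
      (if k = 0 then 1 else 0) + (#U).choose (k + 1) := by
  induction U using Finset.induction_on_max_value r with
  | empty => split_ifs with hk <;> simp [hk, eq_comm]
  | insert a U haU hmax ih =>
    have hlt : ∀ x ∈ U, r x < r a := fun x hx =>
      (hmax x hx).lt_of_ne fun h => (ne_of_mem_of_not_mem hx haU) (hr (by simp [hx]) (by simp) h)
    have hout : {T ∈ U.powerset | #{s ∈ T | ∃ u ∈ insert a U \ T, r s < r u} = k} =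
        powersetCard k U := by
      rw [powersetCard_eq_filter]
      refine filter_congr fun T hT => ?_
      have haT : a ∈ insert a U \ T :=
        mem_sdiff.mpr ⟨mem_insert_self a U, fun h => haU (mem_powerset.mp hT h)⟩
      rw [filter_true_of_mem fun s hs => ⟨a, haT, hlt s (mem_powerset.mp hT hs)⟩]
    have hin : {T ∈ U.powerset |
          #{s ∈ insert a T | ∃ u ∈ insert a U \ insert a T, r s < r u} = k} =
        {T ∈ U.powerset | #{s ∈ T | ∃ u ∈ U \ T, r s < r u} = k} := by
      refine filter_congr fun T _ => ?_
      rw [insert_sdiff_insert, sdiff_insert_of_notMem haU, filter_insert, if_neg]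
      rintro ⟨u, hu, hau⟩
      exact (hlt u (mem_sdiff.mp hu).1).not_gt hau
    rw [card_filter, sum_powerset_insert haU, ← card_filter, ← card_filter, hout, hin,
      card_powersetCard, ih (hr.mono (by simp)), card_insert_of_notMem haU, Nat.choose_succ_succ]
    ring

/-- The index of `j` when `0, …, m - 1` are listed from the outside in: `m - 1, 0, m - 2, 1, …`. -/
def centerRank (m j : ℕ) : ℕ := if 2 * j + 2 ≤ m then 2 * j + 1 else 2 * (m - 1 - j)

theorem centerRank_injOn (m : ℕ) : Set.InjOn (centerRank m) (range m) := by
  intro i hi j hj h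
  simp only [coe_range, Set.mem_Iio] at hi hj
  unfold centerRank at h
  split_ifs at h <;> omega

theorem centerRank_lt_centerRank_iff {m i u : ℕ} (hi : i < m) (hu : u < m) (hne : i ≠ u) :
    centerRank m i < centerRank m u ↔ (i ≤ u ∧ u + i + 2 ≤ m) ∨ (u ≤ i ∧ m ≤ u + i + 1) := by
  unfold centerRank
  split_ifs <;> omega

def runStart (S : Finset ℕ) (i : ℕ) : ℕ := Nat.find (p := fun a => Ico a i ⊆ S) ⟨i, by simp⟩

def skewFun (n : ℕ) (S : Finset ℕ) (i : ℕ) : ℕ :=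
  if i ∈ S then n - 2 - i else n - 1 - runStart S i

/-- `runStart S j ≤ i` says that `j` is the first position after `i` outside `S`. -/
def IsRunCrossing (n : ℕ) (S : Finset ℕ) (i j : ℕ) : Prop :=
  i ∈ S ∧ j ∉ S ∧ i < j ∧ runStart S j ≤ i ∧ (j + i + 3 ≤ n ∨ n ≤ runStart S j + i + 1)

section Runs

variable {n : ℕ} {S : Finset ℕ} {i : ℕ}

theorem Ico_runStart_subset : Ico (runStart S i) i ⊆ S :=
  Nat.find_spec (p := fun a => Ico a i ⊆ S) _

theorem runStart_le_of_Ico_subset {a : ℕ} (h : Ico a i ⊆ S) : runStart S i ≤ a :=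
  Nat.find_min' _ h

theorem runStart_le : runStart S i ≤ i := runStart_le_of_Ico_subset (by simp)

theorem lt_runStart_of_notMem {j : ℕ} (hj : j < i) (hjS : j ∉ S) : j < runStart S i := by
  by_contra! h
  exact hjS (Ico_runStart_subset (mem_Ico.mpr ⟨h, hj⟩))

theorem runStart_sub_one_notMem (h : 0 < runStart S i) : runStart S i - 1 ∉ S := by
  intro hS
  have := runStart_le_of_Ico_subset (S := S) (i := i) (a := runStart S i - 1) fun x hx => by
    rcases (mem_Ico.mp hx).1.eq_or_lt with hx' | hx'
    · rwa [← hx']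
    · exact Ico_runStart_subset (mem_Ico.mpr ⟨by omega, (mem_Ico.mp hx).2⟩)
  omega

theorem skewFun_lt (hi : i < n) : skewFun n S i < n := by
  unfold skewFun
  split_ifs <;> omega

theorem skewFun_of_mem (hi : i ∈ S) : skewFun n S i = n - 2 - i := if_pos hi

theorem skewFun_of_notMem (hi : i ∉ S) : skewFun n S i = n - 1 - runStart S i := if_neg hi

theorem mem_and_runStart_le_of_skewFun_lt (hS : S ⊆ range (n - 1)) {j : ℕ} (hij : i < j)
    (h : skewFun n S i < skewFun n S j) : i ∈ S ∧ j ∉ S ∧ runStart S j ≤ i := by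
  have := runStart_le (S := S) (i := i)
  by_cases hiS : i ∈ S <;> by_cases hjS : j ∈ S <;>
    simp only [skewFun_of_mem, skewFun_of_notMem, hiS, hjS, not_false_eq_true] at h
  · have := mem_range.mp (hS hjS)
    omega
  · have := mem_range.mp (hS hiS)
    exact ⟨hiS, hjS, by omega⟩
  · have := mem_range.mp (hS hjS)
    omega
  · have := lt_runStart_of_notMem hij hiS
    omega

theorem skewFun_injOn (hS : S ⊆ range (n - 1)) : Set.InjOn (skewFun n S) (Set.Iio n) := by
  have key : ∀ i j, i < j → j < n → skewFun n S i ≠ skewFun n S j := by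
    intro i j hij hjn h
    have := runStart_le (S := S) (i := i)
    have := runStart_le (S := S) (i := j)
    by_cases hiS : i ∈ S <;> by_cases hjS : j ∈ S <;>
      simp only [skewFun_of_mem, skewFun_of_notMem, hiS, hjS, not_false_eq_true] at h
    · have := mem_range.mp (hS hjS)
      omega
    · have := mem_range.mp (hS hiS)
      exact runStart_sub_one_notMem (S := S) (i := j) (by omega)
        (by rwa [show runStart S j = i + 1 by omega])
    · have := mem_range.mp (hS hjS)
      omega
    · have := lt_runStart_of_notMem hij hiS
      omega
  intro i hi j hj h
  rcases lt_trichotomy i j with hij | rfl | hij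
  · exact absurd h (key i j hij hj)
  · rfl
  · exact absurd h.symm (key j i hij hi)

theorem IsRunCrossing.lt (hS : S ⊆ range (n - 1)) {j : ℕ} (h : IsRunCrossing n S i j) :
    j < n := by
  obtain ⟨hiS, -, hij, hr, -⟩ := h
  have := mem_range.mp (hS hiS)
  by_contra! hj
  have : n - 1 ∈ S := Ico_runStart_subset (i := j) (mem_Ico.mpr ⟨by omega, by omega⟩)
  simpa using hS this

theorem IsRunCrossing.right_unique {j j' : ℕ} (h : IsRunCrossing n S i j)
    (h' : IsRunCrossing n S i j') : j = j' := by
  obtain ⟨-, hjS, hij, hr, -⟩ := h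
  obtain ⟨-, hjS', hij', hr', -⟩ := h'
  by_contra! hne
  rcases hne.lt_or_gt with hlt | hlt
  · exact hjS (Ico_runStart_subset (mem_Ico.mpr ⟨by omega, hlt⟩))
  · exact hjS' (Ico_runStart_subset (mem_Ico.mpr ⟨by omega, hlt⟩))

theorem exists_isRunCrossing_iff (hS : S ⊆ range (n - 1)) (hi : i ∈ S) :
    (∃ j, IsRunCrossing n S i j) ↔
      ∃ u ∈ range (n - 1) \ S, centerRank (n - 1) i < centerRank (n - 1) u := by
  have hin := mem_range.mp (hS hi)
  have hrank : ∀ u ∈ range (n - 1) \ S, centerRank (n - 1) i < centerRank (n - 1) u ↔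
      (i ≤ u ∧ u + i + 3 ≤ n) ∨ (u ≤ i ∧ n ≤ u + i + 2) := by
    intro u hu
    obtain ⟨hu, huS⟩ := mem_sdiff.mp hu
    rw [centerRank_lt_centerRank_iff hin (mem_range.mp hu) (ne_of_mem_of_not_mem hi huS)]
    omega
  constructor
  · rintro ⟨j, -, hjS, hij, hr, hj | hj⟩
    · have hj' : j ∈ range (n - 1) \ S := mem_sdiff.mpr ⟨mem_range.mpr (by omega), hjS⟩
      exact ⟨j, hj', (hrank j hj').mpr (by omega)⟩
    · have hu : runStart S j - 1 ∈ range (n - 1) \ S :=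
        mem_sdiff.mpr ⟨mem_range.mpr (by omega), runStart_sub_one_notMem (by omega)⟩
      exact ⟨_, hu, (hrank _ hu).mpr (by omega)⟩
  · rintro ⟨u, hu, hiu⟩
    have hex : ∃ j, i < j ∧ j ∉ S := ⟨n - 1, by omega, fun h => by simpa using hS h⟩
    obtain ⟨hij, hjS⟩ := Nat.find_spec hex
    have hr : runStart S (Nat.find hex) ≤ i := runStart_le_of_Ico_subset fun x hx => by
      obtain ⟨hix, hxj⟩ := mem_Ico.mp hx
      rcases hix.eq_or_lt with rfl | hix
      · exact hi
      · simpa [hix] using Nat.find_min hex hxj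
    refine ⟨Nat.find hex, hi, hjS, hij, hr, ?_⟩
    obtain ⟨-, huS⟩ := mem_sdiff.mp hu
    have hne : u ≠ i := fun h => huS (h ▸ hi)
    rcases (hrank u hu).mp hiu with ⟨hiu, hu⟩ | ⟨hui, hu⟩
    · have := Nat.find_min' hex ⟨lt_of_le_of_ne hiu hne.symm, huS⟩
      omega
    · have := lt_runStart_of_notMem (S := S) (i := Nat.find hex) (by omega) huS
      omega

end Runs

section Perm

variable {n : ℕ}

theorem contains_three_iff (σ : Perm (Fin n)) (τ : Fin 3 → ℕ) :
    Contains σ τ ↔ ∃ a b c, a < b ∧ b < c ∧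
      ∀ x y, σ (![a, b, c] x) < σ (![a, b, c] y) ↔ τ x < τ y := by
  constructor
  · rintro ⟨f, hf, hτ⟩
    refine ⟨f 0, f 1, f 2, hf (by decide), hf (by decide), fun x y => ?_⟩
    convert hτ x y using 3 <;> fin_cases x <;> fin_cases y <;> rfl
  · rintro ⟨a, b, c, hab, hbc, hτ⟩
    exact ⟨![a, b, c], Fin.strictMono_iff_lt_succ.mpr (by simp [Fin.forall_fin_succ, hab, hbc]), hτ⟩

theorem contains_p123_iff (σ : Perm (Fin n)) :
    Contains σ p123 ↔ ∃ a b c, a < b ∧ b < c ∧ σ a < σ b ∧ σ b < σ c := by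
  rw [contains_three_iff]
  refine exists₃_congr fun a b c => and_congr_right fun _ => and_congr_right fun _ =>
    ⟨fun h => ⟨(h 0 1).mpr (by decide), (h 1 2).mpr (by decide)⟩, fun ⟨h1, h2⟩ x y => ?_⟩
  fin_cases x <;> fin_cases y <;>
    simp [p123, h1, h2, h1.trans h2, h1.asymm, h2.asymm, (h1.trans h2).asymm]

theorem contains_p132_iff (σ : Perm (Fin n)) :
    Contains σ p132 ↔ ∃ a b c, a < b ∧ b < c ∧ σ a < σ c ∧ σ c < σ b := by
  rw [contains_three_iff]
  refine exists₃_congr fun a b c => and_congr_right fun _ => and_congr_right fun _ =>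
    ⟨fun h => ⟨(h 0 2).mpr (by decide), (h 2 1).mpr (by decide)⟩, fun ⟨h1, h2⟩ x y => ?_⟩
  fin_cases x <;> fin_cases y <;>
    simp [p132, h1, h2, h1.trans h2, h1.asymm, h2.asymm, (h1.trans h2).asymm]

theorem contains_p213_iff (σ : Perm (Fin n)) :
    Contains σ p213 ↔ ∃ a b c, a < b ∧ b < c ∧ σ b < σ a ∧ σ a < σ c := by
  rw [contains_three_iff]
  refine exists₃_congr fun a b c => and_congr_right fun _ => and_congr_right fun _ =>
    ⟨fun h => ⟨(h 1 0).mpr (by decide), (h 0 2).mpr (by decide)⟩, fun ⟨h1, h2⟩ x y => ?_⟩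
  fin_cases x <;> fin_cases y <;>
    simp [p213, h1, h2, h1.trans h2, h1.asymm, h2.asymm, (h1.trans h2).asymm]

def revInvRev (σ : Perm (Fin n)) : Perm (Fin n) := Fin.revPerm * σ⁻¹ * Fin.revPerm

@[simp]
theorem revInvRev_apply_rev (σ : Perm (Fin n)) (x : Fin n) : revInvRev σ (σ x).rev = x.rev := by
  simp [revInvRev]

theorem revInvRev_involutive : Function.Involutive (revInvRev (n := n)) := by
  intro σ
  ext x
  simp [revInvRev]

theorem crs_revInvRev (σ : Perm (Fin n)) : crs (revInvRev σ) = crs σ := by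
  symm
  refine card_equiv ((prodComm _ _).trans ((σ.trans Fin.revPerm).prodCongr (σ.trans Fin.revPerm)))
    fun p => ?_
  simp only [mem_filter, mem_univ, true_and, trans_apply, prodComm_apply, prodCongr_apply,
    Prod.fst_swap, Prod.snd_swap, Prod.map_fst, Prod.map_snd, Fin.revPerm_apply,
    revInvRev_apply_rev, Fin.rev_lt_rev, Fin.rev_le_rev]
  tauto

theorem Contains.revInvRev_p123 {σ : Perm (Fin n)} (h : Contains σ p123) :
    Contains (revInvRev σ) p123 := by
  obtain ⟨a, b, c, hab, hbc, h1, h2⟩ := (contains_p123_iff σ).mp h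
  exact (contains_p123_iff _).mpr ⟨(σ c).rev, (σ b).rev, (σ a).rev, by simpa using h2,
    by simpa using h1, by simpa using hbc, by simpa using hab⟩

theorem Contains.revInvRev_p213 {σ : Perm (Fin n)} (h : Contains σ p132) :
    Contains (revInvRev σ) p213 := by
  obtain ⟨a, b, c, hab, hbc, h1, h2⟩ := (contains_p132_iff σ).mp h
  exact (contains_p213_iff _).mpr ⟨(σ b).rev, (σ c).rev, (σ a).rev, by simpa using h2,
    by simpa using h1, by simpa using hbc, by simpa using hab⟩

theorem Contains.revInvRev_p132 {σ : Perm (Fin n)} (h : Contains σ p213) :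
    Contains (revInvRev σ) p132 := by
  obtain ⟨a, b, c, hab, hbc, h1, h2⟩ := (contains_p213_iff σ).mp h
  exact (contains_p132_iff _).mpr ⟨(σ c).rev, (σ a).rev, (σ b).rev, by simpa using h2,
    by simpa using h1, by simpa using hbc, by simpa using hab⟩

theorem contains_revInvRev_p123_iff (σ : Perm (Fin n)) :
    Contains (revInvRev σ) p123 ↔ Contains σ p123 :=
  ⟨fun h => revInvRev_involutive σ ▸ h.revInvRev_p123, Contains.revInvRev_p123⟩

theorem contains_revInvRev_p213_iff (σ : Perm (Fin n)) :
    Contains (revInvRev σ) p213 ↔ Contains σ p132 :=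
  ⟨fun h => revInvRev_involutive σ ▸ h.revInvRev_p132, Contains.revInvRev_p213⟩

def AntidiagBounded (σ : Perm (Fin n)) : Prop := ∀ i : Fin n, n ≤ (σ i : ℕ) + i + 2

theorem avoids_p123_and_p132_iff_forall (σ : Perm (Fin n)) :
    Avoids σ p123 ∧ Avoids σ p132 ↔ ∀ a b c, a < b → b < c → σ a < σ b → ¬ σ a < σ c := by
  simp only [Avoids, contains_p123_iff, contains_p132_iff, not_exists, not_and]
  constructor
  · rintro ⟨h123, h132⟩ a b c hab hbc hb hc
    rcases lt_trichotomy (σ b) (σ c) with h | h | h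
    · exact h123 a b c hab hbc hb h
    · exact hbc.ne (σ.injective h)
    · exact h132 a b c hab hbc hc h
  · intro h
    exact ⟨fun a b c hab hbc h1 h2 => h a b c hab hbc h1 (h1.trans h2),
      fun a b c hab hbc h1 h2 => h a b c hab hbc (h1.trans h2) h1⟩

theorem two_le_card_later_larger (σ : Perm (Fin n)) (i : Fin n) (hi : (σ i : ℕ) + i + 2 < n) :
    2 ≤ #{p | i < p ∧ σ i < σ p} := by
  have hle : #(Ioi (σ i)) ≤ #((univ.filter fun p => i < p ∧ σ i < σ p) ∪ Iio i) := by
    refine card_le_card_of_injOn σ.symm (fun v hv => ?_) σ.symm.injective.injOn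
    have hv : σ i < v := by simpa using hv
    rcases lt_trichotomy i (σ.symm v) with h | h | h
    · simp [h, hv]
    · simp [h] at hv
    · simp [h]
  have := (card_union_le _ _).trans' hle
  rw [Fin.card_Ioi, Fin.card_Iio] at this
  omega

theorem antidiagBounded_of_forall (σ : Perm (Fin n))
    (h : ∀ a b c, a < b → b < c → σ a < σ b → ¬ σ a < σ c) : AntidiagBounded σ := by
  intro i
  by_contra! hi
  obtain ⟨b, hb, c, hc, hbc⟩ := one_lt_card.mp (two_le_card_later_larger σ i hi)
  simp only [mem_filter, mem_univ, true_and] at hb hc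
  rcases lt_or_gt_of_ne hbc with hlt | hlt
  · exact h i b c hb.1 hlt hb.2 hc.2
  · exact h i c b hc.1 hlt hc.2 hb.2

theorem AntidiagBounded.not_lt {σ : Perm (Fin n)} (hσ : AntidiagBounded σ) {a b c : Fin n}
    (hab : a < b) (hbc : b < c) (hb : σ a < σ b) : ¬ σ a < σ c := by
  intro hc
  have hb' : (σ a : ℕ) < σ b := hb
  have hc' : (σ a : ℕ) < σ c := hc
  have hσa := hσ a
  -- the `a + 3` positions `0, …, a, b, c` all carry one of the `a + 2` values `≥ n - 2 - a`
  have hle := card_le_card_of_injOn (s := insert b (insert c (Iic a))) (t := range (a + 2))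
    (fun p => n - 1 - σ p) (fun p hp => ?_) (fun p _ q _ hpq => ?_)
  · rw [card_insert_of_notMem, card_insert_of_notMem, Fin.card_Iic, card_range] at hle
    · omega
    · simp [hab.trans hbc]
    · simp [hbc.ne, hab]
  · have hp' : p = b ∨ p = c ∨ p ≤ a := by simpa using hp
    have := hσ p
    simp only [coe_range, Set.mem_Iio]
    rcases hp' with rfl | rfl | hpa
    · omega
    · omega
    · have : (p : ℕ) ≤ a := hpa
      omega
  · have := (σ p).isLt
    have := (σ q).isLt
    exact σ.injective (Fin.ext (by simp only at hpq; omega))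

theorem avoids_p123_and_p132_iff (σ : Perm (Fin n)) :
    Avoids σ p123 ∧ Avoids σ p132 ↔ AntidiagBounded σ := by
  rw [avoids_p123_and_p132_iff_forall]
  exact ⟨antidiagBounded_of_forall σ, fun hσ _ _ _ => hσ.not_lt⟩

variable {S : Finset ℕ}

noncomputable def skewPerm (S : Finset ℕ) (hS : S ⊆ range (n - 1)) : Perm (Fin n) :=
  .ofBijective (fun i => ⟨skewFun n S i, skewFun_lt i.isLt⟩) <| Finite.injective_iff_bijective.mp
    fun i j h => Fin.ext (skewFun_injOn hS i.isLt j.isLt (congrArg Fin.val h))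

@[simp]
theorem skewPerm_apply (hS : S ⊆ range (n - 1)) (i : Fin n) :
    (skewPerm S hS i : ℕ) = skewFun n S i := rfl

def subAntidiag (σ : Perm (Fin n)) : Finset ℕ :=
  (univ.filter fun i : Fin n => (σ i : ℕ) + i + 2 = n).map Fin.valEmbedding

theorem coe_mem_subAntidiag {σ : Perm (Fin n)} {i : Fin n} :
    (i : ℕ) ∈ subAntidiag σ ↔ (σ i : ℕ) + i + 2 = n := by
  simp [subAntidiag, Fin.val_inj]

theorem subAntidiag_subset_range (σ : Perm (Fin n)) : subAntidiag σ ⊆ range (n - 1) := by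
  intro i hi
  obtain ⟨i, hi', rfl⟩ : ∃ j : Fin n, (σ j : ℕ) + j + 2 = n ∧ (j : ℕ) = i := by
    simpa [subAntidiag] using hi
  simp only [mem_range]
  omega

theorem antidiagBounded_skewPerm (hS : S ⊆ range (n - 1)) : AntidiagBounded (skewPerm S hS) := by
  intro i
  have := runStart_le (S := S) (i := i)
  rw [skewPerm_apply]
  unfold skewFun
  split_ifs with h
  · have := mem_range.mp (hS h)
    omega
  · omega

theorem subAntidiag_skewPerm (hS : S ⊆ range (n - 1)) : subAntidiag (skewPerm S hS) = S := by
  ext i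
  constructor
  · intro hi
    obtain ⟨i, rfl⟩ : ∃ j : Fin n, (j : ℕ) = i := by
      have := mem_range.mp (subAntidiag_subset_range _ hi)
      exact ⟨⟨i, by omega⟩, rfl⟩
    rw [coe_mem_subAntidiag, skewPerm_apply] at hi
    by_contra h
    have := runStart_le (S := S) (i := i)
    rw [skewFun_of_notMem h] at hi
    omega
  · intro hi
    have := mem_range.mp (hS hi)
    have h := coe_mem_subAntidiag (σ := skewPerm S hS) (i := ⟨i, by omega⟩)
    rw [skewPerm_apply, skewFun_of_mem hi] at h
    exact h.mpr (by simp only; omega)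

theorem exists_apply_eq_of_notMem_subAntidiag {σ : Perm (Fin n)} (hσ : AntidiagBounded σ)
    {i : Fin n} (hi : (i : ℕ) ∉ subAntidiag σ) {v : ℕ} (hv : n - 1 - i ≤ v) (hvn : v < n) :
    ∃ p ≤ i, (σ p : ℕ) = v := by
  rw [coe_mem_subAntidiag] at hi
  have hmaps : ∀ p ∈ Iic i, (σ p : ℕ) ∈ Ico (n - 1 - i) n := by
    intro p hp
    have hpi : (p : ℕ) ≤ i := Fin.le_def.mp (mem_Iic.mp hp)
    have := hσ p
    have : p = i ∨ (p : ℕ) < i := by omega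
    simp only [mem_Ico, Fin.is_lt, and_true]
    rcases this with rfl | h <;> omega
  obtain ⟨p, hp, hpv⟩ := surj_on_of_inj_on_of_card_le (fun p _ => (σ p : ℕ)) hmaps
    (fun p q _ _ h => σ.injective (Fin.ext h))
    (by rw [Nat.card_Ico, Fin.card_Iic]; omega) v (mem_Ico.mpr ⟨hv, hvn⟩)
  exact ⟨p, mem_Iic.mp hp, hpv.symm⟩

theorem coe_apply_eq_skewFun {σ : Perm (Fin n)} (hσ : AntidiagBounded σ) (i : Fin n) :
    (σ i : ℕ) = skewFun n (subAntidiag σ) i := by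
  by_cases hi : (i : ℕ) ∈ subAntidiag σ
  · rw [skewFun_of_mem hi]
    rw [coe_mem_subAntidiag] at hi
    omega
  rw [skewFun_of_notMem hi]
  set a := runStart (subAntidiag σ) i
  have ha : a ≤ i := runStart_le
  have hσi := hσ i
  have hσi' : (σ i : ℕ) + i + 2 ≠ n := fun h => hi (coe_mem_subAntidiag.mpr h)
  rcases lt_trichotomy (σ i : ℕ) (n - 1 - a) with hlt | heq | hgt
  · -- the value `σ i` is already taken by the position `n - 2 - σ i` of the run `[a, i)`
    have hp : n - 2 - σ i ∈ subAntidiag σ :=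
      Ico_runStart_subset (i := i) (mem_Ico.mpr ⟨by omega, by omega⟩)
    set p : Fin n := ⟨n - 2 - σ i, by omega⟩
    have hp' := coe_mem_subAntidiag.mp (show (p : ℕ) ∈ subAntidiag σ from hp)
    have : p = i := σ.injective (Fin.ext (by simp only [p] at hp' ⊢; omega))
    rw [← this] at hσi'
    exact absurd hp' hσi'
  · exact heq
  · -- the value `σ i` is already taken by a position before the run `[a, i)`
    set q : Fin n := ⟨a - 1, by omega⟩
    have hq : (q : ℕ) ∉ subAntidiag σ := runStart_sub_one_notMem (by omega)
    obtain ⟨p, hpq, hp⟩ := exists_apply_eq_of_notMem_subAntidiag hσ hq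
      (v := σ i) (by simp only [q]; omega) (σ i).isLt
    have : p = i := σ.injective (Fin.ext hp)
    rw [this, Fin.le_def] at hpq
    simp only [q] at hpq
    omega

theorem skewPerm_subAntidiag {σ : Perm (Fin n)} (hσ : AntidiagBounded σ) :
    skewPerm (subAntidiag σ) (subAntidiag_subset_range σ) = σ :=
  Equiv.ext fun i => Fin.ext (coe_apply_eq_skewFun hσ i).symm

theorem crossing_skewPerm_iff (hS : S ⊆ range (n - 1)) (i j : Fin n) :
    (i < j ∧ j < skewPerm S hS i ∧ skewPerm S hS i < skewPerm S hS j) ∨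
      (skewPerm S hS i < skewPerm S hS j ∧ skewPerm S hS j ≤ i ∧ i < j) ↔
      IsRunCrossing n S i j := by
  simp only [Fin.lt_def, Fin.le_def, skewPerm_apply]
  constructor
  · intro h
    have hij : (i : ℕ) < j := by tauto
    obtain ⟨hiS, hjS, hr⟩ := mem_and_runStart_le_of_skewFun_lt hS hij (by tauto)
    have := mem_range.mp (hS hiS)
    rw [skewFun_of_mem hiS, skewFun_of_notMem hjS] at h
    exact ⟨hiS, hjS, hij, hr, by omega⟩
  · rintro ⟨hiS, hjS, hij, hr, h⟩
    have := mem_range.mp (hS hiS)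
    rw [skewFun_of_mem hiS, skewFun_of_notMem hjS]
    omega

theorem crs_skewPerm_eq_card (hS : S ⊆ range (n - 1)) :
    crs (skewPerm S hS) = #{i ∈ S | ∃ j, IsRunCrossing n S i j} := by
  unfold crs
  refine card_nbij (fun p => (p.1 : ℕ)) (fun p hp => ?_) (fun p hp q hq hpq => ?_) ?_
  · replace hp : IsRunCrossing n S p.1 p.2 := by simpa [crossing_skewPerm_iff] using hp
    simpa using ⟨hp.1, _, hp⟩
  · replace hp : IsRunCrossing n S p.1 p.2 := by simpa [crossing_skewPerm_iff] using hp
    replace hq : IsRunCrossing n S q.1 q.2 := by simpa [crossing_skewPerm_iff] using hq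
    have hpq : (p.1 : ℕ) = q.1 := hpq
    rw [hpq] at hp
    exact Prod.ext (Fin.ext hpq) (Fin.ext (hp.right_unique hq))
  · intro i hi
    obtain ⟨-, j, hj⟩ := by simpa using hi
    have hi : i < n := by have := mem_range.mp (hS hj.1); omega
    refine ⟨(⟨i, hi⟩, ⟨j, hj.lt hS⟩), ?_, rfl⟩
    simpa [crossing_skewPerm_iff] using hj

theorem crs_skewPerm (hS : S ⊆ range (n - 1)) :
    crs (skewPerm S hS) =
      #{i ∈ S | ∃ u ∈ range (n - 1) \ S, centerRank (n - 1) i < centerRank (n - 1) u} := by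
  rw [crs_skewPerm_eq_card]
  congr 1
  ext i
  simp only [mem_filter]
  exact and_congr_right (exists_isRunCrossing_iff hS)

theorem card_antidiagBounded_crs_eq (k : ℕ) :
    #{σ : Perm (Fin n) | AntidiagBounded σ ∧ crs σ = k} =
      #{S ∈ (range (n - 1)).powerset |
        #{i ∈ S | ∃ u ∈ range (n - 1) \ S, centerRank (n - 1) i < centerRank (n - 1) u} = k} := by
  refine card_bij' (fun σ _ => subAntidiag σ)
    (fun S hS => skewPerm S (mem_powerset.mp (mem_filter.mp hS).1))
    (fun σ hσ => ?_) (fun S hS => ?_) (fun σ hσ => ?_) (fun S hS => ?_)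
  · obtain ⟨hb, rfl⟩ := (mem_filter.mp hσ).2
    rw [mem_filter, mem_powerset, ← crs_skewPerm (subAntidiag_subset_range σ),
      skewPerm_subAntidiag hb]
    exact ⟨subAntidiag_subset_range σ, rfl⟩
  · obtain ⟨hS, rfl⟩ := mem_filter.mp hS
    simp [antidiagBounded_skewPerm, crs_skewPerm]
  · exact skewPerm_subAntidiag (mem_filter.mp hσ).2.1
  · exact subAntidiag_skewPerm _

end Perm

theorem card_avoids_p123_p132_crs_eq (n k : ℕ) :
    #{σ : Perm (Fin n) | Avoids σ p123 ∧ Avoids σ p132 ∧ crs σ = k} =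
      (if k = 0 then 1 else 0) + (n - 1).choose (k + 1) := by
  simp only [← and_assoc, avoids_p123_and_p132_iff]
  rw [card_antidiagBounded_crs_eq]
  convert card_filter_powerset_card_filter_exists_lt _ _ (centerRank_injOn (n - 1)) k
  rw [card_range]

theorem card_avoids_p123_p213_crs_eq (n k : ℕ) :
    #{σ : Perm (Fin n) | Avoids σ p123 ∧ Avoids σ p213 ∧ crs σ = k} =
      #{σ : Perm (Fin n) | Avoids σ p123 ∧ Avoids σ p132 ∧ crs σ = k} := by
  symm
  apply card_equiv revInvRev_involutive.toPerm
  intro σ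
  rw [mem_filter, mem_filter]
  simp only [mem_univ, true_and, Function.Involutive.coe_toPerm, Avoids,
    contains_revInvRev_p123_iff, contains_revInvRev_p213_iff, crs_revInvRev]

theorem count_crossings_123_general (n k : ℕ) (τ : Fin 3 → ℕ)
    (hτ : τ = p132 ∨ τ = p213) :
    (Finset.univ.filter (fun σ : Equiv.Perm (Fin n) =>
        Avoids σ p123 ∧ Avoids σ τ ∧ crs σ = k)).card =
      (if k = 0 then 1 else 0) + Nat.choose (n - 1) (k + 1) := by
  rcases hτ with rfl | rfl
  · exact card_avoids_p123_p132_crs_eq n k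
  · rw [card_avoids_p123_p213_crs_eq, card_avoids_p123_p132_crs_eq]

theorem count_crossings_123 (n k : ℕ) (hn : 1 ≤ n) (τ : Fin 3 → ℕ)
    (hτ : τ = p132 ∨ τ = p213) :
    (Finset.univ.filter (fun σ : Equiv.Perm (Fin n) =>
        Avoids σ p123 ∧ Avoids σ τ ∧ crs σ = k)).card =
      (if k = 0 then 1 else 0) + Nat.choose (n - 1) (k + 1) :=
  count_crossings_123_general n k τ hτ
end

section
/- For all n ≥ 2 and k ≥ 0, the number of permutations σ of [n] avoiding 123 and 213 with σ(n) = 2 and crs(σ) = k equals the binomial coefficient C(n−2, k). -/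
open scoped Classical

/-!
A permutation avoids `123` and `213` iff each entry has at most one smaller entry to its left, and
such a permutation is determined by the set of positions whose entry has one; when the last entry
is `1` (the paper's `σ(n) = 2`, counting from `0`), this leaves at most `2 ^ (n - 2)` of them.
The sets `M ⊆ (1, n)` give `2 ^ (n - 2)` distinct ones, hence all of them: `chainPerm n M` puts
`predBelow M u` at position `n - u` for `u ∈ insert n M`, and `n - p` at every other position `p`.
Its crossings correspond to the points `v ∉ M` separated from their mirror image `n - v` by an
element of `M`. Removing the outer layer `{2, n + 1}` of `M ⊆ (1, n + 2)` and shifting the rest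
down by one multiplies the generating polynomial of this count by `(1 + X) ^ 2`, so it is
`(1 + X) ^ (n - 2)`.
-/

section Patterns

variable {n : ℕ} (σ : Equiv.Perm (Fin n))

def AtMostOneSmallerLeft : Prop :=
  ∀ ⦃i j k : Fin n⦄, i < j → j < k → σ i < σ k → σ j < σ k → False

lemma strictMono_vecCons₃ {i j k : Fin n} (hij : i < j) (hjk : j < k) :
    StrictMono ![i, j, k] := by
  refine Fin.strictMono_iff_lt_succ.mpr fun a => ?_
  fin_cases a
  exacts [hij, hjk]

lemma contains_p123 {i j k : Fin n} (hij : i < j) (hjk : j < k) (h₁ : σ i < σ j)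
    (h₂ : σ j < σ k) : Contains σ p123 := by
  refine ⟨![i, j, k], strictMono_vecCons₃ hij hjk, fun x y => ?_⟩
  have := h₁.trans h₂
  fin_cases x <;> fin_cases y <;> simp [p123, h₁, h₂, this, h₁.le, h₂.le, this.le]

lemma contains_p213 {i j k : Fin n} (hij : i < j) (hjk : j < k) (h₁ : σ j < σ i)
    (h₂ : σ i < σ k) : Contains σ p213 := by
  refine ⟨![i, j, k], strictMono_vecCons₃ hij hjk, fun x y => ?_⟩
  have := h₁.trans h₂
  fin_cases x <;> fin_cases y <;> simp [p213, h₁, h₂, this, h₁.le, h₂.le, this.le]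

theorem avoids_p123_and_p213_iff :
    Avoids σ p123 ∧ Avoids σ p213 ↔ AtMostOneSmallerLeft σ := by
  constructor
  · rintro ⟨h123, h213⟩ i j k hij hjk hik hjk'
    rcases lt_trichotomy (σ i) (σ j) with h | h | h
    · exact h123 (contains_p123 σ hij hjk h hjk')
    · exact hij.ne (σ.injective h)
    · exact h213 (contains_p213 σ hij hjk h hik)
  · have key : ∀ τ : Fin 3 → ℕ, τ 0 < τ 2 → τ 1 < τ 2 →
        AtMostOneSmallerLeft σ → Avoids σ τ :=
      fun τ h₀ h₁ hσ ⟨f, hf, hfτ⟩ =>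
        hσ (hf (by decide : (0 : Fin 3) < 1)) (hf (by decide : (1 : Fin 3) < 2))
          ((hfτ 0 2).mpr h₀) ((hfτ 1 2).mpr h₁)
    intro hσ
    exact ⟨key p123 (by decide) (by decide) hσ, key p213 (by decide) (by decide) hσ⟩

end Patterns

section SmallerLeft

variable {n : ℕ} {σ τ : Equiv.Perm (Fin n)}

lemma AtMostOneSmallerLeft.eq_of_lt (hσ : AtMostOneSmallerLeft σ) {i j k : Fin n}
    (hik : i < k) (hjk : j < k) (hi : σ i < σ k) (hj : σ j < σ k) : i = j := by
  by_contra hij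
  rcases lt_or_gt_of_ne hij with h | h
  exacts [hσ h hjk hi hj, hσ h hik hj hi]

def smallerLeft (σ : Equiv.Perm (Fin n)) : Finset (Fin n) :=
  Finset.univ.filter fun k => ∃ i < k, σ i < σ k

/-- Agreeing to the right of `k`, `σ` and `τ` carry the same values at positions `≤ k`. So if
`σ k < τ k`, then `k` has a smaller entry to its left in `τ`, hence one, `σ c`, in `σ`;
and `σ c` is a second one in `τ`. -/
lemma AtMostOneSmallerLeft.not_lt_of_eqOn_Ioi (hτ : AtMostOneSmallerLeft τ)
    (hS : smallerLeft σ = smallerLeft τ) {k : Fin n} (hk : ∀ j, k < j → σ j = τ j) :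
    ¬ σ k < τ k := by
  intro hlt
  have hleft : ∀ i a, i ≤ k → τ a = σ i → a ≤ k := fun i a hi ha => by
    by_contra! h
    exact absurd hi (not_le.mpr (σ.injective ((hk a h).trans ha) ▸ h))
  obtain ⟨a, ha⟩ := τ.surjective (σ k)
  have hak : a < k := (hleft k a le_rfl ha).lt_of_ne fun h => hlt.ne (h ▸ ha).symm
  have hkS : k ∈ smallerLeft σ :=
    hS ▸ Finset.mem_filter.mpr ⟨Finset.mem_univ _, a, hak, ha ▸ hlt⟩
  obtain ⟨c, hck, hc⟩ := (Finset.mem_filter.mp hkS).2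
  obtain ⟨d, hd⟩ := τ.surjective (σ c)
  have hdk : d < k := (hleft c d hck.le hd).lt_of_ne fun h => (hc.trans hlt).ne (h ▸ hd).symm
  have hda := hτ.eq_of_lt hdk hak (hd ▸ hc.trans hlt) (ha ▸ hlt)
  exact hc.ne (by rw [← hd, ← ha, hda])

theorem AtMostOneSmallerLeft.eq_of_smallerLeft_eq (hσ : AtMostOneSmallerLeft σ)
    (hτ : AtMostOneSmallerLeft τ) (hS : smallerLeft σ = smallerLeft τ) : σ = τ := by
  ext1 k
  induction k using WellFoundedGT.induction with
  | _ k ih =>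
    rcases lt_trichotomy (σ k) (τ k) with h | h | h
    · exact absurd h (hτ.not_lt_of_eqOn_Ioi hS ih)
    · exact h
    · exact absurd h (hσ.not_lt_of_eqOn_Ioi hS.symm fun j hj => (ih j hj).symm)

lemma last_mem_smallerLeft (hn : 2 ≤ n)
    (hσ : (σ ⟨n - 1, Nat.sub_one_lt_of_lt hn⟩ : ℕ) = 1) :
    ⟨n - 1, Nat.sub_one_lt_of_lt hn⟩ ∈ smallerLeft σ := by
  refine Finset.mem_filter.mpr ⟨Finset.mem_univ _, σ.symm ⟨0, by omega⟩, ?_, ?_⟩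
  · refine lt_of_le_of_ne (Fin.le_iff_val_le_val.mpr (Nat.le_sub_one_of_lt (Fin.isLt _)))
      fun h => ?_
    have := congrArg (Fin.val ∘ σ) h
    simp [hσ] at this
  · simp [Fin.lt_def, hσ]

theorem card_atMostOneSmallerLeft_last_eq_one_le (hn : 2 ≤ n) :
    (Finset.univ.filter fun σ : Equiv.Perm (Fin n) =>
      AtMostOneSmallerLeft σ ∧ (σ ⟨n - 1, Nat.sub_one_lt_of_lt hn⟩ : ℕ) = 1).card ≤
        2 ^ (n - 2) := by
  set last : Fin n := ⟨n - 1, Nat.sub_one_lt_of_lt hn⟩ with hlast_def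
  calc _ ≤ (Finset.Ioo (⟨0, by omega⟩ : Fin n) last).powerset.card := by
        refine Finset.card_le_card_of_injOn (fun σ => (smallerLeft σ).erase last) ?_ ?_
        · intro σ _
          rw [Finset.mem_coe, Finset.mem_powerset]
          intro k hk
          obtain ⟨hkl, hk⟩ := Finset.mem_erase.mp hk
          obtain ⟨i, hik, -⟩ := (Finset.mem_filter.mp hk).2
          simp only [Finset.mem_Ioo, Fin.lt_def, Fin.ext_iff, ne_eq, hlast_def] at hik hkl ⊢
          have := k.isLt
          omega
        · intro σ hσ τ hτ h
          simp only [Finset.coe_filter, Finset.mem_univ, true_and, Set.mem_ofPred_eq] at hσ hτ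
          refine hσ.1.eq_of_smallerLeft_eq hτ.1 ?_
          rw [← Finset.insert_erase (last_mem_smallerLeft hn hσ.2),
            ← Finset.insert_erase (last_mem_smallerLeft hn hτ.2)]
          exact congrArg (insert last) h
    _ = 2 ^ (n - 2) := by
        rw [Finset.card_powerset, Fin.card_Ioo]
        rfl

end SmallerLeft

section ChainPermutation

def predBelow (M : Finset ℕ) (u : ℕ) : ℕ := (M.filter (· < u)).sup id

variable {n u w a : ℕ} {M : Finset ℕ}

lemma predBelow_lt (hu : 0 < u) : predBelow M u < u :=
  (Finset.sup_lt_iff hu).mpr fun _ ha => (Finset.mem_filter.mp ha).2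

lemma predBelow_le : predBelow M u ≤ u :=
  u.eq_zero_or_pos.elim (fun h => by simp [predBelow, h]) fun h => (predBelow_lt h).le

lemma le_predBelow (ha : a ∈ M) (hau : a < u) : a ≤ predBelow M u :=
  Finset.le_sup (f := id) (Finset.mem_filter.mpr ⟨ha, hau⟩)

lemma predBelow_eq_zero_or_mem (M : Finset ℕ) (u : ℕ) :
    predBelow M u = 0 ∨ predBelow M u ∈ M := by
  rcases (M.filter (· < u)).eq_empty_or_nonempty with h | h
  · simp [predBelow, h]
  · obtain ⟨b, hb, hbe⟩ := Finset.exists_mem_eq_sup _ h id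
    rw [predBelow, hbe]
    exact Or.inr (Finset.mem_filter.mp hb).1

/-- Reading `insert n M = {m₁ < ⋯ < m_r < n}` as a chain, `chainVal n M` sends
`n ↦ m_r ↦ ⋯ ↦ m₁ ↦ 0` and fixes every other `u`. -/
def chainVal (n : ℕ) (M : Finset ℕ) (u : ℕ) : ℕ :=
  if u ∈ insert n M then predBelow M u else u

lemma chainVal_le : chainVal n M u ≤ u := by
  unfold chainVal; split_ifs
  exacts [predBelow_le, le_rfl]

lemma chainVal_of_notMem (hu : u ∉ insert n M) : chainVal n M u = u := if_neg hu

lemma chainVal_lt_of_mem (hu : u ∈ insert n M) (hu₀ : 0 < u) : chainVal n M u < u := by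
  rw [chainVal, if_pos hu]
  exact predBelow_lt hu₀

lemma le_chainVal (hw : w ∈ insert n M) (hwu : w < u) (hun : u ≤ n) : w ≤ chainVal n M u := by
  unfold chainVal; split_ifs
  · exact le_predBelow ((Finset.mem_insert.mp hw).resolve_left (by omega)) hwu
  · exact hwu.le

lemma chainVal_ne_of_lt (hw₀ : 0 < w) (hwu : w < u) (hun : u ≤ n) :
    chainVal n M w ≠ chainVal n M u := by
  by_cases hw : w ∈ insert n M
  · exact ((chainVal_lt_of_mem hw hw₀).trans_le (le_chainVal hw hwu hun)).ne
  rw [chainVal_of_notMem hw, chainVal]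
  split_ifs
  · rcases predBelow_eq_zero_or_mem M u with h | h
    · omega
    · exact fun he => hw (Finset.mem_insert_of_mem (he ▸ h))
  · exact hwu.ne

lemma chainVal_lt (hu₀ : 0 < u) (hun : u ≤ n) : chainVal n M u < n := by
  by_cases h : u ∈ insert n M
  · exact (chainVal_lt_of_mem h hu₀).trans_le hun
  · rw [chainVal_of_notMem h]
    exact hun.lt_of_ne fun he => h (he ▸ Finset.mem_insert_self _ _)

noncomputable def chainPerm (n : ℕ) (M : Finset ℕ) : Equiv.Perm (Fin n) :=
  Equiv.ofBijective (fun p => ⟨chainVal n M (n - p), chainVal_lt (by omega) (by omega)⟩) <|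
    Finite.injective_iff_bijective.mp fun p q h => by
      have h' : chainVal n M (n - p) = chainVal n M (n - q) := congrArg Fin.val h
      by_contra hpq
      rcases lt_or_gt_of_ne (Fin.val_ne_of_ne hpq) with hlt | hlt
      · exact chainVal_ne_of_lt (by omega) (by omega) (by omega) h'.symm
      · exact chainVal_ne_of_lt (by omega) (by omega) (by omega) h'

lemma chainPerm_apply (p : Fin n) : (chainPerm n M p : ℕ) = chainVal n M (n - p) := rfl

theorem atMostOneSmallerLeft_chainPerm : AtMostOneSmallerLeft (chainPerm n M) := by
  intro i j k hij hjk hik hjk'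
  simp only [Fin.lt_def, chainPerm_apply] at *
  have hk : chainVal n M (n - k) ≤ n - k := chainVal_le
  by_cases hj : n - j ∈ insert n M
  · have := le_chainVal hj (show n - j < n - i by omega) (by omega)
    omega
  · rw [chainVal_of_notMem hj] at hjk'
    omega

lemma chainPerm_last (hn : 2 ≤ n) (h₁ : 1 ∉ M) :
    (chainPerm n M ⟨n - 1, Nat.sub_one_lt_of_lt hn⟩ : ℕ) = 1 := by
  rw [chainPerm_apply, show n - (n - 1) = 1 by omega, chainVal_of_notMem]
  simp only [Finset.mem_insert, h₁, or_false]
  omega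

theorem chainPerm_injOn : Set.InjOn (chainPerm n) (Finset.Ioo 0 n).powerset := by
  have key : ∀ M : Finset ℕ, ∀ v (hv : 0 < v ∧ v < n),
      v ∈ M ↔ (chainPerm n M ⟨n - v, by omega⟩ : ℕ) ≠ v := by
    intro M v hv
    rw [chainPerm_apply, show n - (n - v) = v by omega]
    refine ⟨fun h => (chainVal_lt_of_mem (Finset.mem_insert_of_mem h) hv.1).ne, fun h => ?_⟩
    by_contra hvM
    exact h (chainVal_of_notMem (by simp only [Finset.mem_insert, hvM, or_false]; omega))
  intro M₁ h₁ M₂ h₂ h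
  simp only [Finset.coe_powerset, Set.mem_preimage, Set.mem_powerset_iff,
    Finset.coe_subset] at h₁ h₂
  ext v
  by_cases hv : 0 < v ∧ v < n
  · rw [key M₁ v hv, key M₂ v hv, h]
  · have hv' : v ∉ Finset.Ioo 0 n := by simpa using hv
    exact iff_of_false (fun h => hv' (h₁ h)) (fun h => hv' (h₂ h))

end ChainPermutation

section ChainCrossings

def Separates (n : ℕ) (M : Finset ℕ) (v : ℕ) : Prop :=
  ∃ a ∈ M, (v < a ∧ a ≤ n - v) ∨ (n - v < a ∧ a ≤ v)

noncomputable def chainCrs (n : ℕ) (M : Finset ℕ) : ℕ :=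
  ((Finset.Ioo 0 n).filter fun v => v ∉ M ∧ Separates n M v).card

/-- The crossings of `chainPerm n M`, in the coordinates `u = n - p`, `w = n - q`: the entry at `p`
is a chain step `u ↦ predBelow M u` jumping over the fixed point `w`. -/
def IsChainCrossing (n : ℕ) (M : Finset ℕ) (u w : ℕ) : Prop :=
  u ∈ insert n M ∧ w ∉ insert n M ∧ predBelow M u < w ∧ w < u ∧
    (w ≤ n - u ∨ n - w < predBelow M u)

variable {n u u' w : ℕ} {M : Finset ℕ}

lemma isCrossing_chainPerm_iff (p q : Fin n) :
    ((p < q ∧ q < chainPerm n M p ∧ chainPerm n M p < chainPerm n M q) ∨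
      (chainPerm n M p < chainPerm n M q ∧ chainPerm n M q ≤ p ∧ p < q)) ↔
    IsChainCrossing n M (n - p) (n - q) := by
  simp only [Fin.lt_def, Fin.le_def, chainPerm_apply, IsChainCrossing]
  have hp := p.isLt
  have hq := q.isLt
  by_cases hw : (n - q : ℕ) ∈ insert n M
  · have hwu : ∀ h : (p : ℕ) < q, chainVal n M (n - q) < chainVal n M (n - p) := fun h =>
      (chainVal_lt_of_mem hw (by omega)).trans_le (le_chainVal hw (by omega) (by omega))
    simp only [hw, not_true, false_and, and_false, iff_false]
    rintro (⟨h, -, h'⟩ | ⟨h', -, h⟩) <;> exact absurd h' (hwu h).not_gt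
  rw [chainVal_of_notMem hw]
  by_cases hu : (n - p : ℕ) ∈ insert n M
  · have := predBelow_lt (M := M) (show 0 < n - p by omega)
    rw [chainVal, if_pos hu]
    simp only [hu, hw, not_false_eq_true, true_and]
    omega
  · rw [chainVal_of_notMem hu]
    simp only [hu, false_and, iff_false]
    omega

lemma IsChainCrossing.separates (h : IsChainCrossing n M u w) (hun : u ≤ n) :
    w ∈ Finset.Ioo 0 n ∧ w ∉ M ∧ Separates n M w := by
  obtain ⟨hu, hw, hpw, hwu, hlow | hup⟩ := h
  · exact ⟨Finset.mem_Ioo.mpr ⟨by omega, by omega⟩, fun h => hw (Finset.mem_insert_of_mem h),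
      u, (Finset.mem_insert.mp hu).resolve_left (by omega), Or.inl ⟨hwu, by omega⟩⟩
  · have hmem := (predBelow_eq_zero_or_mem M u).resolve_left (by omega)
    exact ⟨Finset.mem_Ioo.mpr ⟨by omega, by omega⟩, fun h => hw (Finset.mem_insert_of_mem h),
      _, hmem, Or.inr ⟨hup, hpw.le⟩⟩

lemma IsChainCrossing.unique (h : IsChainCrossing n M u w) (h' : IsChainCrossing n M u' w)
    (hun : u ≤ n) (hun' : u' ≤ n) : u = u' := by
  have key : ∀ {u u'}, IsChainCrossing n M u w → IsChainCrossing n M u' w → u' ≤ n →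
      ¬ u < u' :=
    fun h h' hun' hlt => (le_predBelow ((Finset.mem_insert.mp h.1).resolve_left (by omega))
      hlt).not_gt (h'.2.2.1.trans h.2.2.2.1)
  exact le_antisymm (not_lt.mp (key h' h hun)) (not_lt.mp (key h h' hun'))

/-- The chain step over `w` starts at the least chain element above `w`. -/
lemma exists_isChainCrossing (hw : w ∈ Finset.Ioo 0 n) (hwM : w ∉ M) (hsep : Separates n M w) :
    ∃ u ≤ n, IsChainCrossing n M u w := by
  rw [Finset.mem_Ioo] at hw
  have hne : ((insert n M).filter (w < ·)).Nonempty :=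
    ⟨n, Finset.mem_filter.mpr ⟨Finset.mem_insert_self _ _, hw.2⟩⟩
  set u := ((insert n M).filter (w < ·)).min' hne
  obtain ⟨hu, hwu⟩ := Finset.mem_filter.mp (Finset.min'_mem _ hne)
  have hmin : ∀ b ∈ insert n M, w < b → u ≤ b := fun b hb hwb =>
    Finset.min'_le _ _ (Finset.mem_filter.mpr ⟨hb, hwb⟩)
  have hpw : predBelow M u < w := by
    rcases predBelow_eq_zero_or_mem M u with h | h
    · omega
    · by_contra! hle
      have hne' : predBelow M u ≠ w := fun he => hwM (he ▸ h)
      exact (predBelow_lt (M := M) (show 0 < u by omega)).not_ge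
        (hmin _ (Finset.mem_insert_of_mem h) (by omega))
  have hwM' : w ∉ insert n M := by simp only [Finset.mem_insert, hwM, or_false]; omega
  obtain ⟨a, ha, ⟨hwa, han⟩ | ⟨hna, haw⟩⟩ := hsep
  · exact ⟨u, hmin n (Finset.mem_insert_self _ _) hw.2, hu, hwM', hpw, hwu,
      Or.inl (by have := hmin a (Finset.mem_insert_of_mem ha) hwa; omega)⟩
  · exact ⟨u, hmin n (Finset.mem_insert_self _ _) hw.2, hu, hwM', hpw, hwu,
      Or.inr (by have := le_predBelow ha (show a < u by omega); omega)⟩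

theorem crs_chainPerm : crs (chainPerm n M) = chainCrs n M := by
  refine Finset.card_bij (fun pq _ => n - pq.2) ?_ ?_ ?_
  · rintro ⟨p, q⟩ hpq
    have h := (isCrossing_chainPerm_iff p q).mp (Finset.mem_filter.mp hpq).2
    exact Finset.mem_filter.mpr (h.separates (Nat.sub_le _ _))
  · rintro ⟨p, q⟩ hpq ⟨p', q'⟩ hpq' heq
    have h := (isCrossing_chainPerm_iff p q).mp (Finset.mem_filter.mp hpq).2
    have h' := (isCrossing_chainPerm_iff p' q').mp (Finset.mem_filter.mp hpq').2
    have hq : q = q' := Fin.ext (by have := q.isLt; have := q'.isLt; simp only at heq; omega)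
    subst hq
    have hu : n - (p : ℕ) = n - p' := h.unique h' (Nat.sub_le _ _) (Nat.sub_le _ _)
    exact Prod.ext (Fin.ext (show (p : ℕ) = p' by omega)) rfl
  · intro w hw
    obtain ⟨hwI, hwM, hsep⟩ := Finset.mem_filter.mp hw
    obtain ⟨u, hun, hu⟩ := exists_isChainCrossing hwI hwM hsep
    have hw' := Finset.mem_Ioo.mp hwI
    refine ⟨(⟨n - u, by have := hu.2.2.2.1; omega⟩, ⟨n - w, by omega⟩), ?_,
      by simp only; omega⟩
    refine Finset.mem_filter.mpr ⟨Finset.mem_univ _, (isCrossing_chainPerm_iff _ _).mpr ?_⟩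
    simpa only [show n - (n - u) = u by omega, show n - (n - w) = w by omega] using hu

end ChainCrossings

section ChainCrossingPolynomial

open Polynomial

variable {m n w : ℕ} {M M' : Finset ℕ}

lemma chainCrs_empty : chainCrs n ∅ = 0 := by
  simp [chainCrs, Separates]

lemma separates_one_iff (hM : M ⊆ Finset.Ioo 1 m) : Separates m M 1 ↔ M.Nonempty := by
  refine ⟨fun ⟨a, ha, _⟩ => ⟨a, ha⟩, fun ⟨a, ha⟩ => ⟨a, ha, Or.inl ?_⟩⟩
  have := Finset.mem_Ioo.mp (hM ha)
  omega

lemma separates_sub_one_iff (hM : M ⊆ Finset.Ioo 1 m) : Separates m M (m - 1) ↔ M.Nonempty := by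
  refine ⟨fun ⟨a, ha, _⟩ => ⟨a, ha⟩, fun ⟨a, ha⟩ => ⟨a, ha, Or.inr ?_⟩⟩
  have := Finset.mem_Ioo.mp (hM ha)
  omega

section Peel

variable (hM : M ⊆ Finset.Ioo 1 (n + 2)) (hM' : M' ⊆ Finset.Ioo 1 n)
  (hagree : ∀ b ∈ Finset.Ioo 1 n, b + 1 ∈ M ↔ b ∈ M')
include hM' hagree

/-- Neither `2` nor `n + 1` can separate `w + 1` from its mirror image `n + 1 - w`. -/
lemma separates_succ_iff (hw : w ∈ Finset.Ioo 0 n) :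
    Separates (n + 2) M (w + 1) ↔ Separates n M' w := by
  rw [Finset.mem_Ioo] at hw
  constructor
  · rintro ⟨a, ha, hsep⟩
    have ha' : a - 1 ∈ M' := (hagree (a - 1) (Finset.mem_Ioo.mpr (by omega))).mp
      (by rwa [show a - 1 + 1 = a by omega])
    exact ⟨a - 1, ha', by omega⟩
  · rintro ⟨b, hb, hsep⟩
    have := Finset.mem_Ioo.mp (hM' hb)
    exact ⟨b + 1, (hagree b (hM' hb)).mpr hb, by omega⟩

include hM

lemma chainCrs_add_two (hn : 1 ≤ n) :
    chainCrs (n + 2) M = (if M.Nonempty then 1 else 0) +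
      (if n + 1 ∉ M ∧ M.Nonempty then 1 else 0) +
      ((Finset.Ioo 0 n).filter fun w => w + 1 ∉ M ∧ Separates n M' w).card := by
  have hsplit : Finset.Ioo 0 (n + 2) =
      insert 1 (insert (n + 1) ((Finset.Ioo 0 n).image (· + 1))) := by
    ext v
    simp only [Finset.mem_Ioo, Finset.mem_insert, Finset.mem_image]
    constructor
    · intro hv
      by_cases h : v = 1 ∨ v = n + 1
      · tauto
      · exact Or.inr (Or.inr ⟨v - 1, by omega, by omega⟩)
    · rintro (rfl | rfl | ⟨w, hw, rfl⟩) <;> omega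
  have h1 : 1 ∉ M := fun h => by have := Finset.mem_Ioo.mp (hM h); omega
  have hlast : Separates (n + 2) M (n + 1) ↔ M.Nonempty := separates_sub_one_iff hM
  rw [chainCrs, Finset.card_filter, Finset.card_filter, hsplit,
    Finset.sum_insert (by simp only [Finset.mem_insert, Finset.mem_image, Finset.mem_Ioo]; omega),
    Finset.sum_insert (by simp),
    Finset.sum_image (by simp), add_assoc]
  simp only [h1, not_false_eq_true, true_and, separates_one_iff hM, hlast]
  congr 2
  refine Finset.sum_congr rfl fun w hw => ?_
  rw [separates_succ_iff hM' hagree hw]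

/-- Shifted by one, the points counted by `chainCrs n M'` are those counted by `chainCrs (n + 2) M`
in `[2, n]`, except that `2` is lost when `2 ∈ M`; the points `1` and `n + 1` come on top. -/
lemma chainCrs_add_two_of_nonempty (hn : 2 ≤ n) (hne : M'.Nonempty) :
    chainCrs (n + 2) M =
      chainCrs n M' + (if 2 ∈ M then 0 else 1) + (if n + 1 ∈ M then 0 else 1) := by
  have hMne : M.Nonempty := by
    obtain ⟨b, hb⟩ := hne
    exact ⟨b + 1, (hagree b (hM' hb)).mpr hb⟩
  have h1 : 1 ∈ Finset.Ioo 0 n := Finset.mem_Ioo.mpr ⟨by omega, by omega⟩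
  have h1' : 1 ∉ M' := fun h => by have := Finset.mem_Ioo.mp (hM' h); omega
  have hsep := (separates_one_iff hM').mpr hne
  have hrest :
      ∑ w ∈ (Finset.Ioo 0 n).erase 1, (if w + 1 ∉ M ∧ Separates n M' w then 1 else 0) =
      ∑ w ∈ (Finset.Ioo 0 n).erase 1, (if w ∉ M' ∧ Separates n M' w then 1 else 0) := by
    refine Finset.sum_congr rfl fun w hw => ?_
    obtain ⟨hw1, hw⟩ := Finset.mem_erase.mp hw
    have := Finset.mem_Ioo.mp hw
    simp only [hagree w (Finset.mem_Ioo.mpr (by omega))]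
  rw [chainCrs_add_two hM hM' hagree (by omega), chainCrs, Finset.card_filter, Finset.card_filter,
    ← Finset.add_sum_erase _ _ h1, ← Finset.add_sum_erase _ _ h1, hrest]
  simp only [hMne, hsep, h1', not_false_eq_true, and_true, if_true]
  split_ifs <;> omega

end Peel

lemma chainCrs_add_two_of_empty (hn : 1 ≤ n) (hM : M ⊆ Finset.Ioo 1 (n + 2))
    (hagree : ∀ b ∈ Finset.Ioo 1 n, b + 1 ∉ M) :
    chainCrs (n + 2) M =
      (if M.Nonempty then 1 else 0) + (if n + 1 ∉ M ∧ M.Nonempty then 1 else 0) := by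
  rw [chainCrs_add_two hM (Finset.empty_subset _) (by simpa using hagree) hn]
  simp [Separates]


lemma union_image_succ_subset_and_agree (hn : 1 ≤ n) {T : Finset ℕ} (hT : T ⊆ {2, n + 1})
    (hM' : M' ⊆ Finset.Ioo 1 n) :
    T ∪ M'.image (· + 1) ⊆ Finset.Ioo 1 (n + 2) ∧
      ∀ b ∈ Finset.Ioo 1 n, b + 1 ∈ T ∪ M'.image (· + 1) ↔ b ∈ M' := by
  have hT' : ∀ a ∈ T, a = 2 ∨ a = n + 1 := fun a ha => by simpa using hT ha
  refine ⟨fun a ha => ?_, fun b hb => ?_⟩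
  · rw [Finset.mem_Ioo]
    rcases Finset.mem_union.mp ha with ha | ha
    · have := hT' a ha
      omega
    · obtain ⟨b, hb, rfl⟩ := Finset.mem_image.mp ha
      have := Finset.mem_Ioo.mp (hM' hb)
      omega
  · have := Finset.mem_Ioo.mp hb
    have hbT : b + 1 ∉ T := fun h => by have := hT' _ h; omega
    simp [hbT]

lemma sum_X_pow_chainCrs_layer (hn : 2 ≤ n) (hM' : M' ⊆ Finset.Ioo 1 n) :
    (X : ℤ[X]) ^ chainCrs (n + 2) (M'.image (· + 1)) +
        X ^ chainCrs (n + 2) (insert (n + 1) (M'.image (· + 1))) +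
      (X ^ chainCrs (n + 2) (insert 2 (M'.image (· + 1))) +
        X ^ chainCrs (n + 2) (insert 2 (insert (n + 1) (M'.image (· + 1))))) =
    (1 + X) ^ 2 * X ^ chainCrs n M' := by
  have hn₁ : 1 ≤ n := by omega
  obtain ⟨hM₀, hag₀⟩ := union_image_succ_subset_and_agree hn₁ (Finset.empty_subset _) hM'
  obtain ⟨hM₁, hag₁⟩ := union_image_succ_subset_and_agree hn₁ (T := {n + 1}) (by simp) hM'
  obtain ⟨hM₂, hag₂⟩ := union_image_succ_subset_and_agree hn₁ (T := {2}) (by simp) hM'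
  obtain ⟨hM₃, hag₃⟩ := union_image_succ_subset_and_agree hn₁ subset_rfl hM'
  simp only [Finset.empty_union, Finset.singleton_union, Finset.insert_union] at *
  have hn1 : n ≠ 1 := by omega
  rcases M'.eq_empty_or_nonempty with rfl | hne
  · simp only [Finset.image_empty, Finset.insert_empty] at *
    have e₁ : chainCrs (n + 2) {n + 1} = 1 := by
      rw [chainCrs_add_two_of_empty hn₁ hM₁ fun b hb => by simpa using hag₁ b hb]
      simp
    have e₂ : chainCrs (n + 2) {2} = 2 := by
      rw [chainCrs_add_two_of_empty hn₁ hM₂ fun b hb => by simpa using hag₂ b hb]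
      simp [hn1]
    have e₃ : chainCrs (n + 2) {2, n + 1} = 1 := by
      rw [chainCrs_add_two_of_empty hn₁ hM₃ fun b hb => by simpa using hag₃ b hb]
      simp
    rw [chainCrs_empty, chainCrs_empty, e₁, e₂, e₃]
    ring
  · have hbd : ∀ a ∈ M'.image (· + 1), 2 < a ∧ a < n + 1 := by
      simp only [Finset.mem_image, forall_exists_index, and_imp, forall_apply_eq_imp_iff₂]
      exact fun b hb => by have := Finset.mem_Ioo.mp (hM' hb); omega
    have h2 : 2 ∉ M'.image (· + 1) := fun h => by have := hbd 2 h; omega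
    have h2' : n + 1 ∉ M'.image (· + 1) := fun h => by have := hbd _ h; omega
    have e₀ : chainCrs (n + 2) (M'.image (· + 1)) = chainCrs n M' + 2 := by
      rw [chainCrs_add_two_of_nonempty hM₀ hM' hag₀ hn hne]
      simp [h2, h2']
    have e₁ : chainCrs (n + 2) (insert (n + 1) (M'.image (· + 1))) = chainCrs n M' + 1 := by
      rw [chainCrs_add_two_of_nonempty hM₁ hM' hag₁ hn hne]
      simp [h2, hn1]
    have e₂ : chainCrs (n + 2) (insert 2 (M'.image (· + 1))) = chainCrs n M' + 1 := by
      rw [chainCrs_add_two_of_nonempty hM₂ hM' hag₂ hn hne]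
      simp [h2', hn1]
    have e₃ :
        chainCrs (n + 2) (insert 2 (insert (n + 1) (M'.image (· + 1)))) = chainCrs n M' := by
      rw [chainCrs_add_two_of_nonempty hM₃ hM' hag₃ hn hne]
      simp
    rw [e₀, e₁, e₂, e₃]
    ring

lemma sum_X_pow_chainCrs_add_two (hn : 2 ≤ n) :
    ∑ M ∈ (Finset.Ioo 1 (n + 2)).powerset, (X : ℤ[X]) ^ chainCrs (n + 2) M =
      (1 + X) ^ 2 * ∑ M' ∈ (Finset.Ioo 1 n).powerset, X ^ chainCrs n M' := by
  have hI : Finset.Ioo 1 (n + 2) = insert 2 (insert (n + 1) ((Finset.Ioo 1 n).image (· + 1))) := by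
    ext a
    simp only [Finset.mem_Ioo, Finset.mem_insert, Finset.mem_image]
    constructor
    · intro ha
      by_cases h : a = 2 ∨ a = n + 1
      · tauto
      · exact Or.inr (Or.inr ⟨a - 1, by omega, by omega⟩)
    · rintro (rfl | rfl | ⟨b, hb, rfl⟩) <;> omega
  rw [hI, Finset.sum_powerset_insert
    (by simp only [Finset.mem_insert, Finset.mem_image, Finset.mem_Ioo]; omega)]
  simp only [Finset.sum_powerset_insert (show n + 1 ∉ (Finset.Ioo 1 n).image (· + 1) by simp)]
  have hshift : Set.InjOn (Finset.image (· + 1)) ((Finset.Ioo 1 n).powerset : Set (Finset ℕ)) :=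
    (Finset.image_injective (add_left_injective 1)).injOn
  simp only [Finset.powerset_image, Finset.sum_image hshift, ← Finset.sum_add_distrib,
    Finset.mul_sum]
  exact Finset.sum_congr rfl fun M' hM' =>
    sum_X_pow_chainCrs_layer hn (Finset.mem_powerset.mp hM')

theorem sum_X_pow_chainCrs (hn : 2 ≤ n) :
    ∑ M ∈ (Finset.Ioo 1 n).powerset, (X : ℤ[X]) ^ chainCrs n M = (1 + X) ^ (n - 2) := by
  induction n using Nat.strong_induction_on with
  | _ n ih =>
    obtain ⟨k, rfl⟩ := Nat.exists_eq_add_of_le hn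
    match k with
    | 0 =>
      rw [show Finset.Ioo 1 (2 + 0) = ∅ by rfl, Finset.powerset_empty, Finset.sum_singleton,
        chainCrs_empty]
      rfl
    | 1 =>
      have : chainCrs 3 {2} = 1 := by
        rw [chainCrs, Finset.card_eq_one]
        exact ⟨1, by
          ext v
          simp only [Finset.mem_filter, Finset.mem_Ioo, Finset.mem_singleton, Separates,
            exists_eq_left]
          omega⟩
      rw [show Finset.Ioo 1 (2 + 1) = insert 2 ∅ by rfl, Finset.sum_powerset_insert (by simp),
        Finset.powerset_empty, Finset.sum_singleton, Finset.sum_singleton, chainCrs_empty]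
      simp [this]
    | k + 2 =>
      rw [show 2 + (k + 2) = (k + 2) + 2 by omega, sum_X_pow_chainCrs_add_two (by omega),
        ih (k + 2) (by omega) (by omega), ← pow_add]
      congr 1
      omega

end ChainCrossingPolynomial

section Main

open Polynomial

lemma coeff_Fpoly {n : ℕ} (P : Equiv.Perm (Fin n) → Prop) (k : ℕ) :
    (Fpoly n P).coeff k = ((Finset.univ.filter fun σ => P σ ∧ crs σ = k).card : ℤ) := by
  rw [Fpoly, finsetSum_coeff, ← Finset.sum_boole]
  refine Finset.sum_congr rfl fun σ _ => ?_
  by_cases hσ : P σ <;> simp [hσ, coeff_X_pow, eq_comm]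

theorem Fpoly_atMostOneSmallerLeft_last_eq_one {n : ℕ} (hn : 2 ≤ n) :
    Fpoly n (fun σ => AtMostOneSmallerLeft σ ∧
      (σ ⟨n - 1, Nat.sub_one_lt_of_lt hn⟩ : ℕ) = 1) =
      (1 + X) ^ (n - 2) := by
  set C := Finset.univ.filter fun σ : Equiv.Perm (Fin n) =>
    AtMostOneSmallerLeft σ ∧ (σ ⟨n - 1, Nat.sub_one_lt_of_lt hn⟩ : ℕ) = 1
  have hmaps : Set.MapsTo (chainPerm n) (Finset.Ioo 1 n).powerset C := fun M hM => by
    have h₁ : 1 ∉ M := fun h => by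
      have := Finset.mem_Ioo.mp (Finset.mem_powerset.mp hM h)
      omega
    exact Finset.mem_coe.mpr (Finset.mem_filter.mpr
      ⟨Finset.mem_univ _, atMostOneSmallerLeft_chainPerm, chainPerm_last hn h₁⟩)
  have hinj : Set.InjOn (chainPerm n) (Finset.Ioo 1 n).powerset :=
    chainPerm_injOn.mono <| Finset.coe_subset.mpr <| Finset.powerset_mono.mpr <|
      Finset.Ioo_subset_Ioo_left (Nat.zero_le 1)
  have hsurj : Set.SurjOn (chainPerm n) (Finset.Ioo 1 n).powerset C := by
    refine Finset.surjOn_of_injOn_of_card_le _ hmaps hinj ?_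
    rw [Finset.card_powerset, Nat.card_Ioo]
    exact card_atMostOneSmallerLeft_last_eq_one_le hn
  calc
    Fpoly n _ = ∑ σ ∈ C, X ^ crs σ := by
      rw [Fpoly, Finset.sum_filter]
      exact Finset.sum_congr rfl fun _ _ => by congr
    _ = ∑ M ∈ (Finset.Ioo 1 n).powerset, X ^ crs (chainPerm n M) :=
      (Finset.sum_nbij _ (fun M hM => hmaps hM) hinj hsurj fun _ _ => rfl).symm
    _ = (1 + X) ^ (n - 2) := by simp only [crs_chainPerm, sum_X_pow_chainCrs hn]

end Main

theorem count_crossings_123_213_val (n k : ℕ) (hn : 2 ≤ n) :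
    (Finset.univ.filter (fun σ : Equiv.Perm (Fin n) =>
        Avoids σ p123 ∧ Avoids σ p213 ∧ (σ ⟨n - 1, by omega⟩ : ℕ) = 1 ∧ crs σ = k)).card =
      Nat.choose (n - 2) k := by
  have h := coeff_Fpoly (fun σ : Equiv.Perm (Fin n) =>
    AtMostOneSmallerLeft σ ∧ (σ ⟨n - 1, Nat.sub_one_lt_of_lt hn⟩ : ℕ) = 1) k
  rw [Fpoly_atMostOneSmallerLeft_last_eq_one hn, Polynomial.coeff_one_add_X_pow] at h
  simp only [← avoids_p123_and_p213_iff, and_assoc] at h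
  exact_mod_cast h.symm
end

section
/- For all n ≥ 2, F_n(312,213;q) = F_{n-1}(312,213;q) + F_{n-1}(231,213;q), where F_m(τ₁,τ₂;q) = Σ_{σ ∈ S_m(τ₁,τ₂)} q^{crs(σ)} over permutations of [m] avoiding both τ₁ and τ₂. -/
open scoped Classical

/-!
A permutation avoids both 312 and 213 exactly when it has no valley, i.e. no entry with a larger
entry on each side; so its minimum stands first or last. Deleting a leading minimum leaves a
permutation without valley and with the same crossings. Deleting a trailing minimum leaves a
permutation `ρ` without valley and with `crs σ = crs ρ⁻¹`, and `ρ` has no valley exactly when `ρ⁻¹`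
avoids 231 and 213.
-/

namespace Equiv.Perm

variable {n : ℕ}

lemma contains_iff_exists_triple (σ : Perm (Fin n)) (π : Fin 3 → ℕ) :
    Contains σ π ↔ ∃ i j k : Fin n, i < j ∧ j < k ∧
      ∀ x y : Fin 3, σ (![i, j, k] x) < σ (![i, j, k] y) ↔ π x < π y := by
  constructor
  · rintro ⟨f, hf, hπ⟩
    refine ⟨f 0, f 1, f 2, hf (by decide), hf (by decide), fun x y => ?_⟩
    have hfv : ![f 0, f 1, f 2] = f := by ext x; fin_cases x <;> rfl
    rw [hfv]; exact hπ x y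
  · rintro ⟨i, j, k, hij, hjk, hπ⟩
    refine ⟨![i, j, k], Fin.strictMono_iff_lt_succ.mpr fun x => ?_, hπ⟩
    fin_cases x <;> assumption

lemma contains_p312_iff (σ : Perm (Fin n)) :
    Contains σ p312 ↔ ∃ i j k, i < j ∧ j < k ∧ σ j < σ k ∧ σ k < σ i := by
  simp [contains_iff_exists_triple, Fin.forall_fin_succ, p312]
  grind

lemma contains_p213_iff (σ : Perm (Fin n)) :
    Contains σ p213 ↔ ∃ i j k, i < j ∧ j < k ∧ σ j < σ i ∧ σ i < σ k := by
  simp [contains_iff_exists_triple, Fin.forall_fin_succ, p213]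
  grind

lemma contains_p231_iff (σ : Perm (Fin n)) :
    Contains σ p231 ↔ ∃ i j k, i < j ∧ j < k ∧ σ k < σ i ∧ σ i < σ j := by
  simp [contains_iff_exists_triple, Fin.forall_fin_succ, p231]
  grind

def NoValley (σ : Perm (Fin n)) : Prop :=
  ∀ i j k, i < j → j < k → ¬ (σ j < σ i ∧ σ j < σ k)

lemma avoids_p312_and_avoids_p213_iff (σ : Perm (Fin n)) :
    Avoids σ p312 ∧ Avoids σ p213 ↔ NoValley σ := by
  simp only [Avoids, contains_p312_iff, contains_p213_iff, NoValley]
  have := σ.injective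
  grind

lemma avoids_p231_and_avoids_p213_iff (σ : Perm (Fin n)) :
    Avoids σ p231 ∧ Avoids σ p213 ↔ NoValley σ.symm := by
  simp only [Avoids, contains_p231_iff, contains_p213_iff, NoValley]
  have := σ.injective
  grind [symm_apply_apply, apply_symm_apply]

variable {m : ℕ}

-- In one-line notation `consZero τ = 0 (τ + 1)` and `snocZero τ = (τ + 1) 0`.
def consZero (τ : Perm (Fin m)) : Perm (Fin (m + 1)) := decomposeFin.symm (0, τ)

def snocZero (τ : Perm (Fin m)) : Perm (Fin (m + 1)) := consZero τ * finRotate (m + 1)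

@[simp] lemma consZero_zero (τ : Perm (Fin m)) : consZero τ 0 = 0 :=
  decomposeFin_symm_apply_zero 0 τ

@[simp] lemma consZero_succ (τ : Perm (Fin m)) (i : Fin m) : consZero τ i.succ = (τ i).succ := by
  simp [consZero, decomposeFin_symm_apply_succ]

@[simp] lemma snocZero_last (τ : Perm (Fin m)) : snocZero τ (Fin.last m) = 0 := by
  simp [snocZero]

@[simp] lemma snocZero_castSucc (τ : Perm (Fin m)) (i : Fin m) :
    snocZero τ i.castSucc = (τ i).succ := by
  have : finRotate (m + 1) i.castSucc = i.succ := by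
    ext; rw [coe_finRotate_of_ne_last (Fin.castSucc_lt_last i).ne]; simp
  simp [snocZero, this]

lemma sum_filter_apply_zero_eq_zero {M : Type*} [AddCommMonoid M] (f : Perm (Fin (m + 1)) → M) :
    ∑ σ with σ 0 = 0, f σ = ∑ τ, f (consZero τ) := by
  rw [Finset.sum_filter, ← decomposeFin.symm.sum_comp, Fintype.sum_prod_type]
  simp [decomposeFin_symm_apply_zero, consZero]

lemma sum_filter_apply_last_eq_zero {M : Type*} [AddCommMonoid M] (f : Perm (Fin (m + 1)) → M) :
    ∑ σ with σ (Fin.last m) = 0, f σ = ∑ τ, f (snocZero τ) := by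
  rw [Finset.sum_filter, ← _root_.Equiv.sum_comp (Equiv.mulRight (finRotate (m + 1)))]
  simp only [coe_mulRight, mul_apply, finRotate_last]
  rw [← Finset.sum_filter, sum_filter_apply_zero_eq_zero]
  rfl

lemma crs_consZero (τ : Perm (Fin m)) : crs (consZero τ) = crs τ := by
  simp only [crs, Finset.card_filter, Fintype.sum_prod_type, Fin.sum_univ_succ]
  simp [Fin.succ_lt_succ_iff, Fin.succ_le_succ_iff]

lemma crs_snocZero (τ : Perm (Fin m)) : crs (snocZero τ) = crs τ.symm := by
  simp only [crs, Finset.card_filter]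
  conv_rhs => rw [← _root_.Equiv.sum_comp (τ.prodCongr τ)]
  simp only [Fintype.sum_prod_type, Fin.sum_univ_castSucc, prodCongr_apply, Prod.map,
    symm_apply_apply]
  simp [Fin.castSucc_lt_succ_iff, Fin.succ_le_castSucc_iff, (Fin.le_last _).not_gt, or_comm]

lemma noValley_consZero_iff (τ : Perm (Fin m)) : NoValley (consZero τ) ↔ NoValley τ := by
  simp [NoValley, Fin.forall_fin_succ, Fin.succ_lt_succ_iff]

lemma noValley_snocZero_iff (τ : Perm (Fin m)) : NoValley (snocZero τ) ↔ NoValley τ := by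
  simp [NoValley, Fin.forall_fin_succ', Fin.le_last]

lemma NoValley.apply_zero_eq_zero_or_apply_last_eq_zero {σ : Perm (Fin (m + 1))}
    (h : NoValley σ) : σ 0 = 0 ∨ σ (Fin.last m) = 0 := by
  by_contra! hne
  obtain ⟨j, hj⟩ := σ.surjective 0
  have h0 : 0 < j := Fin.pos_iff_ne_zero.mpr (by rintro rfl; exact hne.1 hj)
  have hlast : j < Fin.last m := (Fin.le_last j).lt_of_ne (by rintro rfl; exact hne.2 hj)
  refine h 0 j _ h0 hlast ?_
  rw [hj]
  exact ⟨Fin.pos_iff_ne_zero.mpr hne.1, Fin.pos_iff_ne_zero.mpr hne.2⟩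

end Equiv.Perm

open Equiv Perm

lemma Fpoly_eq_add_of_forall_apply_zero_or_apply_last {m : ℕ} (P : Perm (Fin (m + 2)) → Prop)
    (hP : ∀ σ, P σ → σ 0 = 0 ∨ σ (Fin.last (m + 1)) = 0) :
    Fpoly (m + 2) P =
      Fpoly (m + 1) (fun τ => P (consZero τ)) + Fpoly (m + 1) (fun τ => P (snocZero τ.symm)) := by
  set g : Perm (Fin (m + 2)) → Polynomial ℤ := fun σ => if P σ then .X ^ crs σ else 0
  have hsplit (σ : Perm (Fin (m + 2))) :
      g σ = (if σ 0 = 0 then g σ else 0) + (if σ (Fin.last _) = 0 then g σ else 0) := by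
    by_cases h0 : σ 0 = 0
    · have hl : σ (Fin.last _) ≠ 0 := h0 ▸ σ.injective.ne Fin.last_pos.ne'
      simp [h0, hl]
    by_cases hl : σ (Fin.last _) = 0
    · simp [h0, hl]
    have hnP : ¬ P σ := fun hσ => (hP σ hσ).elim h0 hl
    simp [g, h0, hl, hnP]
  calc Fpoly (m + 2) P = ∑ σ, g σ := rfl
    _ = ∑ σ with σ 0 = 0, g σ + ∑ σ with σ (Fin.last _) = 0, g σ := by
      rw [Finset.sum_filter, Finset.sum_filter, ← Finset.sum_add_distrib]
      exact Finset.sum_congr rfl fun σ _ => hsplit σ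
    _ = ∑ τ : Perm (Fin (m + 1)), g (consZero τ) + ∑ τ : Perm (Fin (m + 1)), g (snocZero τ⁻¹) := by
      rw [sum_filter_apply_zero_eq_zero, sum_filter_apply_last_eq_zero,
        ← Equiv.sum_comp (Equiv.inv _) (fun τ => g (snocZero τ))]
      rfl
    _ = _ := by simp [g, Fpoly, crs_consZero, crs_snocZero, Perm.inv_def]

theorem Fpoly_312_213 (n : ℕ) (hn : 2 ≤ n) :
    Fpoly n (fun σ => Avoids σ p312 ∧ Avoids σ p213) =
      Fpoly (n - 1) (fun σ => Avoids σ p312 ∧ Avoids σ p213)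
        + Fpoly (n - 1) (fun σ => Avoids σ p231 ∧ Avoids σ p213) := by
  obtain ⟨m, rfl⟩ : ∃ m, n = m + 2 := ⟨n - 2, by omega⟩
  simp only [avoids_p312_and_avoids_p213_iff, avoids_p231_and_avoids_p213_iff]
  rw [Fpoly_eq_add_of_forall_apply_zero_or_apply_last _
    fun σ h => h.apply_zero_eq_zero_or_apply_last_eq_zero]
  simp [noValley_consZero_iff, noValley_snocZero_iff]
end

section
/- For all integers n ≥ 1 and r ≥ 0, the number of permutations of [2n] having exactly r crossings is even. -/
open scoped Classical

/-!
The map `σ ↦ (i ↦ -σ (m - 1 - i))`, with negation taken mod `m`, is an involution on permutations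
of `Fin m` preserving the number of crossings. Under `(i, j) ↦ (m - 1 - j, m - 1 - i)` it
exchanges upper and lower crossings, except for the crossings involving the point `k` with
`σ k = 0`: those lost and those gained are equinumerous, because `σ` maps as many points `≤ k`
above `k` as points above `k` to points `≤ k`. For even `m` a fixed point would force
`m - 1 - k = k`, so the involution is fixed-point free and the permutations with `r` crossings
come in pairs.
-/

open Finset

theorem Finset.even_card_of_involution {α : Type*} {s : Finset α} (g : α → α)
    (hg_mem : ∀ a ∈ s, g a ∈ s) (hg_invol : ∀ a ∈ s, g (g a) = a) (hg_ne : ∀ a ∈ s, g a ≠ a) :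
    Even #s := by
  rw [← ZMod.natCast_eq_zero_iff_even, Finset.cast_card]
  exact sum_involution (fun a _ => g a) (fun _ _ => by decide) (fun a ha _ => hg_ne a ha)
    hg_mem hg_invol

theorem Equiv.Perm.card_filter_and_not_apply_comm {α : Type*} [Fintype α] (σ : Equiv.Perm α)
    (p : α → Prop) [DecidablePred p] :
    #{a | p a ∧ ¬ p (σ a)} = #{a | ¬ p a ∧ p (σ a)} := by
  have h : #{a | p (σ a)} = #{a | p a} := card_equiv σ (by simp)
  convert card_sdiff_comm h.symm using 2 <;> ext <;> simp [and_comm]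

theorem Fin.val_neg_cases {m : ℕ} (y : Fin m) :
    (y.val = 0 ∧ (-y).val = 0) ∨ (0 < y.val ∧ (-y).val = m - y.val) := by
  rcases Nat.eq_zero_or_pos y.val with h | h
  · simp [Fin.val_neg', h]
  · right
    refine ⟨h, ?_⟩
    rw [Fin.val_neg', Nat.mod_eq_of_lt (by omega)]

section Crossings

variable {m : ℕ}

def upperCrossings (σ : Equiv.Perm (Fin m)) : Finset (Fin m × Fin m) :=
  {p | p.1 < p.2 ∧ p.2 < σ p.1 ∧ σ p.1 < σ p.2}

def lowerCrossings (σ : Equiv.Perm (Fin m)) : Finset (Fin m × Fin m) :=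
  {p | σ p.1 < σ p.2 ∧ σ p.2 ≤ p.1 ∧ p.1 < p.2}

theorem crs_eq_card_upperCrossings_add_card_lowerCrossings (σ : Equiv.Perm (Fin m)) :
    crs σ = #(upperCrossings σ) + #(lowerCrossings σ) := by
  rw [crs, filter_or, card_union_of_disjoint]
  · rfl
  · exact disjoint_filter.2 fun _ _ hU hL =>
      lt_irrefl _ (hU.2.1.trans (hL.1.trans (hL.2.1.trans_lt hL.2.2)))

def negRev (σ : Equiv.Perm (Fin m)) : Equiv.Perm (Fin m) :=
  Fin.revPerm.trans (σ.trans (Equiv.neg _))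

@[simp]
theorem negRev_apply (σ : Equiv.Perm (Fin m)) (i : Fin m) : negRev σ i = -σ (Fin.rev i) := rfl

theorem negRev_involutive : Function.Involutive (negRev (m := m)) := fun σ => by
  ext i
  simp

def revSwap : Fin m × Fin m ≃ Fin m × Fin m :=
  (Equiv.prodComm _ _).trans (Fin.revPerm.prodCongr Fin.revPerm)

variable [NeZero m]

theorem rev_swap_mem_upperCrossings_negRev (σ : Equiv.Perm (Fin m)) (a b : Fin m) :
    (Fin.rev b, Fin.rev a) ∈ upperCrossings (negRev σ) ↔ (a, b) ∈ lowerCrossings σ ∧ σ a ≠ 0 := by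
  simp only [upperCrossings, lowerCrossings, mem_filter, mem_univ, true_and, negRev_apply,
    Fin.rev_rev, Fin.lt_def, Fin.le_def, Fin.val_rev, ne_eq, Fin.ext_iff, Fin.val_zero]
  have := a.isLt; have := b.isLt
  rcases Fin.val_neg_cases (σ a) with ⟨_, _⟩ | ⟨_, _⟩ <;>
    rcases Fin.val_neg_cases (σ b) with ⟨_, _⟩ | ⟨_, _⟩ <;> omega

theorem rev_swap_mem_lowerCrossings_negRev (σ : Equiv.Perm (Fin m)) (a b : Fin m) :
    (Fin.rev b, Fin.rev a) ∈ lowerCrossings (negRev σ) ↔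
      (a, b) ∈ upperCrossings σ ∨ (a < b ∧ σ b = 0 ∧ b < σ a) := by
  simp only [upperCrossings, lowerCrossings, mem_filter, mem_univ, true_and, negRev_apply,
    Fin.rev_rev, Fin.lt_def, Fin.le_def, Fin.val_rev, Fin.ext_iff, Fin.val_zero]
  have := a.isLt; have := b.isLt; have := (σ a).isLt; have := (σ b).isLt
  rcases Fin.val_neg_cases (σ a) with ⟨_, _⟩ | ⟨_, _⟩ <;>
    rcases Fin.val_neg_cases (σ b) with ⟨_, _⟩ | ⟨_, _⟩ <;> omega

theorem card_upperCrossings_negRev (σ : Equiv.Perm (Fin m)) :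
    #(upperCrossings (negRev σ)) = #{p ∈ lowerCrossings σ | σ p.1 ≠ 0} :=
  (card_equiv revSwap fun ⟨a, b⟩ => by
    rw [mem_filter]
    exact (rev_swap_mem_upperCrossings_negRev σ a b).symm).symm

theorem card_lowerCrossings_negRev (σ : Equiv.Perm (Fin m)) :
    #(lowerCrossings (negRev σ)) =
      #(upperCrossings σ) + #{p : Fin m × Fin m | p.1 < p.2 ∧ σ p.2 = 0 ∧ p.2 < σ p.1} := by
  rw [← card_union_of_disjoint]
  · refine (card_equiv revSwap fun ⟨a, b⟩ => ?_).symm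
    rw [mem_union, mem_filter_univ]
    exact (rev_swap_mem_lowerCrossings_negRev σ a b).symm
  · refine disjoint_filter.2 fun p _ hU h0 => ?_
    simpa [h0.2.1] using hU.2.2

theorem card_lowerCrossings_filter_apply_fst_eq_zero (σ : Equiv.Perm (Fin m)) :
    #{p ∈ lowerCrossings σ | σ p.1 = 0} =
      #{p : Fin m × Fin m | p.1 < p.2 ∧ σ p.2 = 0 ∧ p.2 < σ p.1} := by
  set k := σ.symm 0
  have hk : ∀ i, σ i = 0 ↔ i = k := fun i => σ.eq_symm_apply.symm
  calc #{p ∈ lowerCrossings σ | σ p.1 = 0}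
      = #{b | ¬ b ≤ k ∧ σ b ≤ k} := by
        refine card_nbij' Prod.snd (fun b => (k, b)) ?_ ?_ ?_ fun _ _ => rfl
        all_goals
          intro x hx
          simp only [coe_filter, lowerCrossings, mem_filter, mem_univ, true_and,
            Set.mem_ofPred_eq] at hx ⊢
          grind [Fin.pos_iff_ne_zero]
    _ = #{a | a ≤ k ∧ ¬ σ a ≤ k} := (σ.card_filter_and_not_apply_comm (· ≤ k)).symm
    _ = #{p : Fin m × Fin m | p.1 < p.2 ∧ σ p.2 = 0 ∧ p.2 < σ p.1} := by
        refine card_nbij' (fun a => (a, k)) Prod.fst ?_ ?_ (fun _ _ => rfl) ?_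
        all_goals
          intro x hx
          simp only [coe_filter, Set.mem_ofPred_eq] at hx ⊢
          grind [Fin.pos_iff_ne_zero]

theorem crs_negRev (σ : Equiv.Perm (Fin m)) : crs (negRev σ) = crs σ := by
  have hsplit := card_filter_add_card_filter_not (s := lowerCrossings σ) (fun p => σ p.1 ≠ 0)
  simp only [not_not] at hsplit
  rw [crs_eq_card_upperCrossings_add_card_lowerCrossings,
    crs_eq_card_upperCrossings_add_card_lowerCrossings, card_upperCrossings_negRev,
    card_lowerCrossings_negRev, ← card_lowerCrossings_filter_apply_fst_eq_zero]
  omega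

theorem negRev_ne_self (hm : Even m) (σ : Equiv.Perm (Fin m)) : negRev σ ≠ σ := by
  intro h
  set k := σ.symm 0
  have hrev : Fin.rev k = k := σ.injective <|
    calc σ (Fin.rev k) = negRev σ (Fin.rev k) := by rw [h]
      _ = σ k := by simp [k]
  have hval := Fin.val_rev k
  rw [hrev] at hval
  obtain ⟨j, hj⟩ := hm
  omega

end Crossings

theorem even_count_crossings (n r : ℕ) (hn : 1 ≤ n) :
    Even (Finset.univ.filter
      (fun σ : Equiv.Perm (Fin (2 * n)) => crs σ = r)).card := by
  have : NeZero (2 * n) := ⟨by omega⟩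
  refine even_card_of_involution negRev (fun σ hσ => ?_) (fun σ _ => negRev_involutive σ)
    (fun σ _ => negRev_ne_self (even_two_mul n) σ)
  simpa [crs_negRev] using hσ
end
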